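/- arXiv:2011.05607 — 2 statements merged into one kernel-verified Lean document; each statement's English description precedes it below -/
import Mathlib

section
/- Let d ≥ 1 and let k be a real number with 1 < k < d that is not an integer. Then the number of (d−1)-dimensional exposed faces (facets) of ρ_{d,k} equals 2^{⌊k⌋+1} · binom(d, ⌊k⌋+1) · (⌊k⌋+1); more precisely, the facets of k·ρ_{d,k} are exactly the sets conv(G ∪ S) where, for some subset I ⊆ {1,…,d} of cardinality ⌊k⌋+1 and some signs σ_i ∈ {−1,+1} for i ∈ I, G = {x ∈ [−1,1]^d : x_i = σ_i for all i ∈ I} is a (d−⌊k⌋−1)-dimensional face of γ_d and S is the simplex whose vertices are any ⌊k⌋ of the ⌊k⌋+1 points {k σ_i e_i : i ∈ I}. -/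
open scoped Pointwise

noncomputable section

/-- The hypercube `γ_d = [-1,1]^d` in `ℝ^d`. -/
def hcube (d : ℕ) : Set (EuclideanSpace ℝ (Fin d)) := {x | ∀ i, |x i| ≤ 1}

/-- The cross-polytope `β_d = {x : ∑ |x_i| ≤ 1}` in `ℝ^d`. -/
def cross (d : ℕ) : Set (EuclideanSpace ℝ (Fin d)) := {x | ∑ i, |x i| ≤ 1}

/-- The polytope `ρ_{d,k} = conv(β_d ∪ (1/k)γ_d)`. -/
def rho (d : ℕ) (k : ℝ) : Set (EuclideanSpace ℝ (Fin d)) :=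
  convexHull ℝ (cross d ∪ (1 / k) • hcube d)

/-!
Write `P = k • ρ_{d,k} = conv (k β_d ∪ γ_d)`. For `u ≠ 0` with `t = max |u_i|`, the maximum
`∑ |u_i|` of `⟪u, ·⟫` over `γ_d` is attained on the cube face `x_i = sign u_i` (`u_i ≠ 0`), of
dimension at most `d - #{u_i ≠ 0}`, and the maximum `k t` over `k β_d` on the simplex spanned by
the `k (sign u_i) e_i` with `|u_i| = t`, of dimension at most `#{|u_i| = t} - 1`; the face of `P`
in direction `u` is the convex hull of the pieces attaining the larger value. Counting dimensions,
a facet needs both pieces, so `∑ |u_i| = k t`, and at most one coordinate with `0 < |u_i| < t`; as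
`k` is not an integer there is exactly one, hence `⌊k⌋` coordinates are `± t` and one is
`± (k - ⌊k⌋) t`. Conversely, for each such normal the two pieces span a hyperplane, so a facet
determines its normal, and counting normals by support, special coordinate and signs gives the
number of facets.
-/

open scoped RealInnerProductSpace
open Module

section Affine

variable {V : Type*} [AddCommGroup V] [Module ℝ V]

theorem convexHull_setOf_eq_of_forall_le (l : V →ₗ[ℝ] ℝ) {A : Set V} {M : ℝ}
    (hA : ∀ a ∈ A, l a ≤ M) :
    {x ∈ convexHull ℝ A | l x = M} = convexHull ℝ {a ∈ A | l a = M} := by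
  classical
  refine subset_antisymm ?_ (convexHull_min (fun a ha => ⟨subset_convexHull ℝ A ha.1, ha.2⟩)
    ((convex_convexHull ℝ A).inter (convex_hyperplane l.isLinear M)))
  rintro x ⟨hx, hxM⟩
  obtain ⟨ι, t, w, z, hw₀, hw₁, hz, rfl⟩ := (convexHull_eq A).subset hx
  have hgap : ∑ i ∈ t, w i * (M - l (z i)) = 0 := by
    rw [Finset.centerMass_eq_of_sum_1 _ _ hw₁, map_sum] at hxM
    simp only [map_smul, smul_eq_mul] at hxM
    simp only [mul_sub, Finset.sum_sub_distrib, ← Finset.sum_mul, hw₁, hxM, one_mul, sub_self]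
  have hmax : ∀ i ∈ t, w i ≠ 0 → l (z i) = M := fun i hi hwi => by
    have := (Finset.sum_eq_zero_iff_of_nonneg fun i hi =>
      mul_nonneg (hw₀ i hi) (sub_nonneg.2 (hA _ (hz i hi)))).1 hgap i hi
    linarith [(mul_eq_zero.1 this).resolve_left hwi]
  rw [← Finset.centerMass_filter_ne_zero]
  refine Finset.centerMass_mem_convexHull _ (fun i hi => hw₀ i (Finset.mem_filter.1 hi).1)
    (by rw [Finset.sum_filter_ne_zero, hw₁]; exact one_pos) fun i hi => ?_
  obtain ⟨hi, hwi⟩ := Finset.mem_filter.1 hi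
  exact ⟨hz i hi, hmax i hi hwi⟩

theorem vectorSpan_convexHull (s : Set V) : vectorSpan ℝ (convexHull ℝ s) = vectorSpan ℝ s := by
  rw [← direction_affineSpan, affineSpan_convexHull, direction_affineSpan]

theorem vectorSpan_smul_set (s : Set V) {c : ℝ} (hc : c ≠ 0) :
    vectorSpan ℝ (c • s) = vectorSpan ℝ s := by
  have := AffineMap.map_vectorSpan (c • LinearMap.id (R := ℝ) (M := V)).toAffineMap (s := s)
  rw [LinearMap.toAffineMap_linear, Submodule.map_smul _ _ _ hc, Submodule.map_id] at this
  rw [this, ← Set.image_smul]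
  rfl

theorem finrank_vectorSpan_union_image_le {ι : Type*} [DecidableEq ι] (s : Set V) (p : ι → V)
    (J : Finset ι) :
    finrank ℝ (vectorSpan ℝ (s ∪ p '' J)) ≤ finrank ℝ (vectorSpan ℝ s) + J.card := by
  induction J using Finset.induction_on with
  | empty =>
    rw [Finset.coe_empty, Set.image_empty, Set.union_empty]
    exact Nat.le_add_right _ _
  | insert i J hi ih =>
    rw [Finset.coe_insert, Set.image_insert_eq, Set.union_insert, Finset.card_insert_of_notMem hi]
    exact (finrank_vectorSpan_insert_le_set ℝ _ _).trans (by omega)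

end Affine

section Facet

variable {V : Type*} [AddCommGroup V] [Module ℝ V] [TopologicalSpace V]

theorem IsExposed.smul_set {A F : Set V} (h : IsExposed ℝ A F) {c : ℝ} (hc : 0 < c) :
    IsExposed ℝ (c • A) (c • F) := by
  rintro ⟨-, x, hx, rfl⟩
  obtain ⟨l, rfl⟩ := h ⟨x, hx⟩
  refine ⟨l, ?_⟩
  ext y
  simp only [Set.mem_smul_set, Set.mem_ofPred_eq, forall_exists_index, and_imp,
    forall_apply_eq_imp_iff₂, map_smul, smul_eq_mul]
  constructor
  · rintro ⟨y, ⟨hy, hmax⟩, rfl⟩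
    exact ⟨⟨y, hy, rfl⟩, fun z hz => by simpa [mul_le_mul_iff_right₀ hc] using hmax z hz⟩
  · rintro ⟨⟨y, hy, rfl⟩, hmax⟩
    exact ⟨y, ⟨hy, fun z hz => by simpa [mul_le_mul_iff_right₀ hc] using hmax z hz⟩, rfl⟩

def IsFacet (A F : Set V) : Prop :=
  IsExposed ℝ A F ∧ F.Nonempty ∧ finrank ℝ (vectorSpan ℝ F) = finrank ℝ V - 1

theorem IsFacet.smul_set {A F : Set V} (h : IsFacet A F) {c : ℝ} (hc : 0 < c) :
    IsFacet (c • A) (c • F) :=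
  ⟨h.1.smul_set hc, h.2.1.smul_set, by rw [vectorSpan_smul_set F hc.ne', h.2.2]⟩

theorem setOf_isFacet_smul_set (A : Set V) {c : ℝ} (hc : 0 < c) :
    {F | IsFacet (c • A) F} = (c • ·) '' {F | IsFacet A F} := by
  refine subset_antisymm (fun F hF => ⟨c⁻¹ • F, ?_, smul_inv_smul₀ hc.ne' F⟩)
    (Set.image_subset_iff.2 fun F hF => hF.smul_set hc)
  simpa [inv_smul_smul₀ hc.ne'] using hF.smul_set (inv_pos.2 hc)

end Facet

section InnerProductSpace

variable {V : Type*} [NormedAddCommGroup V] [InnerProductSpace ℝ V]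

theorem IsExposed.exists_eq_setOf_inner_eq [CompleteSpace V] {A F : Set V}
    (h : IsExposed ℝ A F) (hF : F.Nonempty) :
    ∃ u : V, ∃ M : ℝ, (∀ x ∈ A, ⟪u, x⟫ ≤ M) ∧ F = {x ∈ A | ⟪u, x⟫ = M} := by
  obtain ⟨l, rfl⟩ := h hF
  obtain ⟨x₀, hx₀, hmax⟩ := hF
  refine ⟨(InnerProductSpace.toDual ℝ V).symm l, l x₀, ?_, ?_⟩ <;>
    simp only [InnerProductSpace.toDual_symm_apply]
  · exact hmax
  · ext x
    exact and_congr_right fun hx => ⟨fun h => le_antisymm (hmax x hx) (h x₀ hx₀),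
      fun h y hy => h ▸ hmax y hy⟩

theorem isExposed_setOf_inner_eq {A : Set V} {u : V} {M : ℝ} (hA : ∀ x ∈ A, ⟪u, x⟫ ≤ M) :
    IsExposed ℝ A {x ∈ A | ⟪u, x⟫ = M} := by
  rintro ⟨x₀, hx₀, hx₀M⟩
  refine ⟨innerSL ℝ u, ?_⟩
  ext x
  simp only [innerSL_apply_apply]
  exact and_congr_right fun hx => ⟨fun h y hy => h ▸ hA y hy,
    fun h => le_antisymm (hA x hx) (hx₀M ▸ h x₀ hx₀)⟩

theorem IsFacet.exists_eq_setOf_inner_eq [FiniteDimensional ℝ V] {A F : Set V}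
    (hF : IsFacet A F) (hA : vectorSpan ℝ A = ⊤) (hV : 0 < finrank ℝ V) :
    ∃ u ≠ 0, ∃ M : ℝ, (∀ x ∈ A, ⟪u, x⟫ ≤ M) ∧ F = {x ∈ A | ⟪u, x⟫ = M} := by
  obtain ⟨u, M, hle, rfl⟩ := hF.1.exists_eq_setOf_inner_eq hF.2.1
  refine ⟨u, fun hu => ?_, M, hle, rfl⟩
  obtain ⟨x, -, hx⟩ := hF.2.1
  have hAF : {x ∈ A | ⟪u, x⟫ = M} = A := by
    ext y
    simp [hu, ← hx]
  have := hF.2.2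
  rw [hAF, hA, finrank_top] at this
  omega

theorem vectorSpan_le_orthogonal_of_inner_eq {s : Set V} {u : V} {c : ℝ}
    (h : ∀ x ∈ s, ⟪u, x⟫ = c) : vectorSpan ℝ s ≤ (ℝ ∙ u)ᗮ := by
  rw [vectorSpan_def, Submodule.span_le]
  rintro _ ⟨x, hx, y, hy, rfl⟩
  change x - y ∈ (ℝ ∙ u)ᗮ
  rw [Submodule.mem_orthogonal_singleton_iff_inner_right, inner_sub_right, h x hx, h y hy,
    sub_self]

theorem eq_of_orthogonal_span_singleton_eq [FiniteDimensional ℝ V] {u v : V}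
    (h : (ℝ ∙ u)ᗮ = (ℝ ∙ v)ᗮ) {x : V} {c : ℝ} (hc : c ≠ 0) (hu : ⟪u, x⟫ = c)
    (hv : ⟪v, x⟫ = c) : u = v := by
  have hspan : ℝ ∙ v = ℝ ∙ u := by
    rw [← Submodule.orthogonal_orthogonal (ℝ ∙ u), h, Submodule.orthogonal_orthogonal]
  obtain ⟨a, rfl⟩ := Submodule.mem_span_singleton.1 (hspan ▸ Submodule.mem_span_singleton_self v)
  rw [inner_smul_left, hu, RCLike.conj_to_real, mul_eq_right₀ hc] at hv
  rw [hv, one_smul]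

theorem finrank_orthogonal_span_singleton_eq [FiniteDimensional ℝ V] {u : V} (hu : u ≠ 0) :
    finrank ℝ (ℝ ∙ u)ᗮ = finrank ℝ V - 1 := by
  have := Submodule.finrank_add_finrank_orthogonal (ℝ ∙ u)
  rw [finrank_span_singleton hu] at this
  omega

end InnerProductSpace

theorem abs_eq_one_of_eq_abs_mul {a b : ℝ} (ha : a ≠ 0) (h : a = |a| * b) : |b| = 1 := by
  have := congrArg abs h
  rw [abs_mul, abs_abs] at this
  exact (mul_eq_left₀ (abs_ne_zero.2 ha)).1 this.symm

namespace Rho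

variable {d : ℕ}

theorem isFacet_iff {A F : Set (EuclideanSpace ℝ (Fin d))} :
    IsFacet A F ↔ IsExposed ℝ A F ∧ F.Nonempty ∧ finrank ℝ (vectorSpan ℝ F) = d - 1 := by
  rw [IsFacet, finrank_euclideanSpace_fin]

theorem inner_eq_sum (u x : EuclideanSpace ℝ (Fin d)) : ⟪u, x⟫ = ∑ i, u i * x i := by
  simp [PiLp.inner_apply, mul_comm]

theorem sum_smul_single_apply (s : Finset (Fin d)) (c : Fin d → ℝ) (l : Fin d) :
    (∑ i ∈ s, c i • EuclideanSpace.single i (1 : ℝ) : EuclideanSpace ℝ (Fin d)) l =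
      if l ∈ s then c l else 0 := by
  simp [Pi.single_apply]

theorem mem_span_single_of_apply_eq_zero {s : Finset (Fin d)} {v : EuclideanSpace ℝ (Fin d)}
    (hv : ∀ i ∉ s, v i = 0) :
    v ∈ Submodule.span ℝ ((fun i => EuclideanSpace.single i (1 : ℝ)) '' s) := by
  have : v = ∑ i ∈ s, v i • EuclideanSpace.single i (1 : ℝ) := by
    ext l
    rw [sum_smul_single_apply]
    split_ifs with hl
    · rfl
    · exact hv l hl
  rw [this]
  exact Submodule.sum_mem _ fun i hi =>
    Submodule.smul_mem _ _ (Submodule.subset_span (Set.mem_image_of_mem _ hi))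

theorem eq_top_of_forall_single_mem {W : Submodule ℝ (EuclideanSpace ℝ (Fin d))}
    (h : ∀ l, EuclideanSpace.single l (1 : ℝ) ∈ W) : W = ⊤ := by
  refine eq_top_iff.2 fun x _ => Submodule.span_le.2 ?_
    (mem_span_single_of_apply_eq_zero (s := Finset.univ) (v := x) (by simp))
  rintro _ ⟨l, -, rfl⟩
  exact h l

def cubeFace (I : Finset (Fin d)) (σ : Fin d → ℝ) : Set (EuclideanSpace ℝ (Fin d)) :=
  {x ∈ hcube d | ∀ i ∈ I, x i = σ i}

def crossVert (k : ℝ) (σ : Fin d → ℝ) (i : Fin d) : EuclideanSpace ℝ (Fin d) :=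
  (k * σ i) • EuclideanSpace.single i 1

def crossVerts (k : ℝ) (J : Finset (Fin d)) (σ : Fin d → ℝ) : Set (EuclideanSpace ℝ (Fin d)) :=
  {p | ∃ i ∈ J, p = crossVert k σ i}

theorem crossVerts_eq_image (k : ℝ) (J : Finset (Fin d)) (σ : Fin d → ℝ) :
    crossVerts k J σ = crossVert k σ '' J := by
  ext p
  simp [crossVerts, eq_comm]

theorem crossVert_apply (k : ℝ) (σ : Fin d → ℝ) (i l : Fin d) :
    crossVert k σ i l = if l = i then k * σ i else 0 := by
  simp [crossVert, PiLp.single_apply]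

theorem inner_crossVert (u : EuclideanSpace ℝ (Fin d)) (k : ℝ) (σ : Fin d → ℝ) (i : Fin d) :
    ⟪u, crossVert k σ i⟫ = k * σ i * u i := by
  simp [crossVert, inner_smul_right, EuclideanSpace.inner_single_right]

section Cube

variable {u x : EuclideanSpace ℝ (Fin d)}

theorem mul_le_abs_of_mem_hcube (hx : x ∈ hcube d) (i : Fin d) : u i * x i ≤ |u i| :=
  calc u i * x i ≤ |u i| * |x i| := (le_abs_self _).trans (abs_mul _ _).le
    _ ≤ |u i| := mul_le_of_le_one_right (abs_nonneg _) (hx i)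

theorem inner_le_of_mem_hcube (hx : x ∈ hcube d) : ⟪u, x⟫ ≤ ∑ i, |u i| := by
  rw [inner_eq_sum]
  exact Finset.sum_le_sum fun i _ => mul_le_abs_of_mem_hcube hx i

theorem inner_eq_iff_mem_cubeFace {I : Finset (Fin d)} {σ : Fin d → ℝ}
    (hI : ∀ i, u i ≠ 0 ↔ i ∈ I) (hσ : ∀ i, u i = |u i| * σ i) (hx : x ∈ hcube d) :
    ⟪u, x⟫ = ∑ i, |u i| ↔ x ∈ cubeFace I σ := by
  rw [inner_eq_sum, Finset.sum_eq_sum_iff_of_le fun i _ => mul_le_abs_of_mem_hcube hx i]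
  simp only [Finset.mem_univ, true_imp_iff, cubeFace, Set.mem_ofPred_eq, hx, true_and]
  refine forall_congr' fun i => ?_
  by_cases hi : i ∈ I
  · have hui : |u i| ≠ 0 := abs_ne_zero.2 ((hI i).2 hi)
    have hσ1 : σ i * σ i = 1 :=
      mul_self_eq_one_iff.2 ((abs_eq zero_le_one).1 (abs_eq_one_of_eq_abs_mul ((hI i).2 hi) (hσ i)))
    rw [imp_iff_right hi]
    nth_rewrite 1 [hσ i]
    constructor
    · intro h
      rw [mul_assoc, mul_eq_left₀ hui] at h
      linear_combination σ i * h - x i * hσ1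
    · intro h
      rw [h, mul_assoc, hσ1, mul_one]
  · simp [hi, not_not.1 (mt (hI i).1 hi)]

end Cube

section Cross

variable {k t : ℝ} {u y : EuclideanSpace ℝ (Fin d)}

theorem mem_smul_cross_iff (hk : 0 < k) : y ∈ k • cross d ↔ ∑ i, |y i| ≤ k := by
  rw [Set.mem_smul_set_iff_inv_smul_mem₀ hk.ne']
  simp only [cross, Set.mem_ofPred_eq, PiLp.smul_apply, smul_eq_mul, abs_mul,
    abs_inv, abs_of_pos hk, ← Finset.mul_sum, inv_mul_le_iff₀ hk, mul_one]

theorem crossVert_mem_smul_cross (hk : 0 < k) {σ : Fin d → ℝ} {i : Fin d} (hσ : |σ i| = 1) :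
    crossVert k σ i ∈ k • cross d := by
  simp [mem_smul_cross_iff hk, crossVert_apply, apply_ite, abs_mul, hσ, abs_of_pos hk]

theorem inner_le_of_mem_smul_cross (hk : 0 < k) (ht0 : 0 ≤ t) (ht : ∀ i, |u i| ≤ t)
    (hy : y ∈ k • cross d) : ⟪u, y⟫ ≤ k * t :=
  calc ⟪u, y⟫ ≤ ∑ i, t * |y i| := by
        rw [inner_eq_sum]
        refine Finset.sum_le_sum fun i _ => (le_abs_self _).trans ?_
        rw [abs_mul]
        exact mul_le_mul_of_nonneg_right (ht i) (abs_nonneg _)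
    _ ≤ k * t := by
        rw [← Finset.mul_sum, mul_comm k]
        exact mul_le_mul_of_nonneg_left ((mem_smul_cross_iff hk).1 hy) ht0

theorem mem_convexHull_crossVerts_of_apply_eq (hk : 0 < k) {T : Finset (Fin d)} {σ : Fin d → ℝ}
    (hyT : ∀ i, y i = if i ∈ T then σ i * |y i| else 0) (hsum : ∑ i, |y i| = k) :
    y ∈ convexHull ℝ (crossVerts k T σ) := by
  have hsumT : ∑ i ∈ T, |y i| = k := by
    rw [← hsum, ← Finset.sum_subset (Finset.subset_univ T) fun i _ hi => by simp [hyT i, hi]]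
  have hcenter : T.centerMass (fun i => |y i|) (crossVert k σ) = y := by
    ext l
    conv_rhs => rw [hyT l]
    simp only [Finset.centerMass, hsumT, PiLp.smul_apply, WithLp.ofLp_sum, Finset.sum_apply,
      crossVert_apply, smul_eq_mul, mul_ite, mul_zero, Finset.sum_ite_eq]
    split_ifs <;> field_simp
  rw [← hcenter, crossVerts_eq_image]
  exact Finset.centerMass_mem_convexHull T (fun i _ => abs_nonneg _) (hsumT ▸ hk)
    fun i hi => Set.mem_image_of_mem _ hi

theorem mem_convexHull_crossVerts_of_inner_eq (hk : 0 < k) (ht0 : 0 < t) (ht : ∀ i, |u i| ≤ t)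
    {T : Finset (Fin d)} (hT : ∀ i, |u i| = t ↔ i ∈ T) {σ : Fin d → ℝ}
    (hσ : ∀ i, u i = |u i| * σ i) (hy : y ∈ k • cross d) (heq : ⟪u, y⟫ = k * t) :
    y ∈ convexHull ℝ (crossVerts k T σ) := by
  have hterm : ∀ i, u i * y i ≤ t * |y i| := fun i =>
    (le_abs_self _).trans (abs_mul (u i) _ ▸ mul_le_mul_of_nonneg_right (ht i) (abs_nonneg _))
  have hsum : ∑ i, |y i| = k := by
    refine le_antisymm ((mem_smul_cross_iff hk).1 hy) (le_of_mul_le_mul_left ?_ ht0)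
    calc t * k = ∑ i, u i * y i := by rw [← inner_eq_sum, heq, mul_comm]
      _ ≤ t * ∑ i, |y i| := by
        rw [Finset.mul_sum]
        exact Finset.sum_le_sum fun i _ => hterm i
  have htight : ∀ i, u i * y i = t * |y i| := by
    have : ∑ i, u i * y i = ∑ i, t * |y i| := by
      rw [← inner_eq_sum, heq, ← Finset.mul_sum, hsum, mul_comm]
    exact fun i => (Finset.sum_eq_sum_iff_of_le fun i _ => hterm i).1 this i (Finset.mem_univ i)
  refine mem_convexHull_crossVerts_of_apply_eq hk (fun i => ?_) hsum
  split_ifs with hi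
  · have hui : u i ≠ 0 := abs_ne_zero.1 (((hT i).2 hi).trans_ne ht0.ne')
    have hσ1 : σ i * σ i = 1 :=
      mul_self_eq_one_iff.2 ((abs_eq zero_le_one).1 (abs_eq_one_of_eq_abs_mul hui (hσ i)))
    have := htight i
    rw [hσ i, (hT i).2 hi, mul_assoc] at this
    linear_combination σ i * (mul_left_cancel₀ ht0.ne' this) - y i * hσ1
  · have hlt : |u i| < t := (ht i).lt_of_ne (mt (hT i).1 hi)
    have : (t - |u i|) * |y i| ≤ 0 := by
      nlinarith [htight i, abs_mul (u i) (y i), le_abs_self (u i * y i)]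
    exact abs_eq_zero.1 (le_antisymm (nonpos_of_mul_nonpos_right this (sub_pos.2 hlt))
      (abs_nonneg _))

end Cross

def scaledRho (d : ℕ) (k : ℝ) : Set (EuclideanSpace ℝ (Fin d)) :=
  convexHull ℝ (k • cross d ∪ hcube d)

theorem smul_rho {k : ℝ} (hk : k ≠ 0) : k • rho d k = scaledRho d k := by
  rw [rho, ← convexHull_smul, Set.smul_set_union, smul_smul, mul_one_div_cancel hk, one_smul,
    scaledRho]

theorem vectorSpan_scaledRho (k : ℝ) : vectorSpan ℝ (scaledRho d k) = ⊤ := by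
  have h0 : (0 : EuclideanSpace ℝ (Fin d)) ∈ scaledRho d k :=
    subset_convexHull ℝ _ (Or.inr fun i => by simp)
  refine eq_top_of_forall_single_mem fun l => ?_
  have hl : EuclideanSpace.single l (1 : ℝ) ∈ scaledRho d k :=
    subset_convexHull ℝ _ (Or.inr fun i => by rw [PiLp.single_apply]; split_ifs <;> simp)
  simpa using vsub_mem_vectorSpan ℝ hl h0

section Face

variable {k t : ℝ} {u : EuclideanSpace ℝ (Fin d)} {I T : Finset (Fin d)} {σ : Fin d → ℝ}

theorem inner_le_of_mem_scaledRho (hk : 0 < k) (ht0 : 0 ≤ t) (ht : ∀ i, |u i| ≤ t) {M : ℝ}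
    (hMcube : ∑ i, |u i| ≤ M) (hMcross : k * t ≤ M) {x : EuclideanSpace ℝ (Fin d)}
    (hx : x ∈ scaledRho d k) : ⟪u, x⟫ ≤ M := by
  refine convexHull_min ?_ (convex_halfSpace_le (innerₗ _ u).isLinear M) hx
  rintro a (ha | ha)
  · exact (inner_le_of_mem_smul_cross hk ht0 ht ha).trans hMcross
  · exact (inner_le_of_mem_hcube ha).trans hMcube

variable (hk : 0 < k) (ht0 : 0 < t) (ht : ∀ i, |u i| ≤ t) (hI : ∀ i, u i ≠ 0 ↔ i ∈ I)
  (hσ : ∀ i, u i = |u i| * σ i) (hT : ∀ i, |u i| = t ↔ i ∈ T)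
include hk ht0 ht hI hσ hT

theorem setOf_inner_eq_subset_convexHull {M : ℝ} (hMcube : ∑ i, |u i| ≤ M)
    (hMcross : k * t ≤ M) :
    {x ∈ scaledRho d k | ⟪u, x⟫ = M} ⊆ convexHull ℝ
      ({a | ∑ i, |u i| = M ∧ a ∈ cubeFace I σ} ∪
        {a | k * t = M ∧ a ∈ convexHull ℝ (crossVerts k T σ)}) := by
  have hface := convexHull_setOf_eq_of_forall_le (innerₗ _ u) fun a ha =>
    inner_le_of_mem_scaledRho hk ht0.le ht hMcube hMcross (subset_convexHull ℝ _ ha)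
  simp only [innerₗ_apply_apply] at hface
  rw [scaledRho, hface]
  refine convexHull_mono ?_
  rintro a ⟨ha | ha, haM⟩
  · have hkt : k * t = M := le_antisymm hMcross (haM ▸ inner_le_of_mem_smul_cross hk ht0.le ht ha)
    exact Or.inr ⟨hkt, mem_convexHull_crossVerts_of_inner_eq hk ht0 ht hT hσ ha
      (haM.trans hkt.symm)⟩
  · have hsum : ∑ i, |u i| = M := le_antisymm hMcube (haM ▸ inner_le_of_mem_hcube ha)
    exact Or.inl ⟨hsum, (inner_eq_iff_mem_cubeFace hI hσ ha).1 (haM.trans hsum.symm)⟩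

theorem setOf_inner_eq_eq_convexHull (hM : ∑ i, |u i| = k * t) :
    {x ∈ scaledRho d k | ⟪u, x⟫ = k * t} = convexHull ℝ (cubeFace I σ ∪ crossVerts k T σ) := by
  refine subset_antisymm ?_ (convexHull_min ?_ ?_)
  · rw [← convexHull_convexHull_union_right]
    exact (setOf_inner_eq_subset_convexHull hk ht0 ht hI hσ hT hM.le le_rfl).trans
      (convexHull_mono (Set.union_subset_union (fun a ha => ha.2) fun a ha => ha.2))
  · rintro a (ha | ⟨i, hi, rfl⟩)
    · exact ⟨subset_convexHull ℝ _ (Or.inr ha.1),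
        hM ▸ (inner_eq_iff_mem_cubeFace hI hσ ha.1).2 ha⟩
    · have hσi : |σ i| = 1 :=
        abs_eq_one_of_eq_abs_mul (abs_ne_zero.1 (((hT i).2 hi).trans_ne ht0.ne')) (hσ i)
      refine ⟨subset_convexHull ℝ _ (Or.inl (crossVert_mem_smul_cross hk hσi)), ?_⟩
      rw [inner_crossVert, hσ i, (hT i).2 hi]
      linear_combination k * t * mul_self_eq_one_iff.2 ((abs_eq zero_le_one).1 hσi)
  · exact (convex_convexHull ℝ _).inter (convex_hyperplane (innerₗ _ u).isLinear _)

end Face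

section Dimension

theorem finrank_vectorSpan_cubeFace_le (I : Finset (Fin d)) (σ : Fin d → ℝ) :
    finrank ℝ (vectorSpan ℝ (cubeFace I σ)) ≤ d - I.card := by
  classical
  have hle : vectorSpan ℝ (cubeFace I σ) ≤
      Submodule.span ℝ ((fun i => EuclideanSpace.single i (1 : ℝ)) '' ↑Iᶜ) := by
    rw [vectorSpan_def, Submodule.span_le]
    rintro _ ⟨x, hx, y, hy, rfl⟩
    refine mem_span_single_of_apply_eq_zero fun i hi => ?_
    rw [Finset.mem_compl, not_not] at hi
    simp [hx.2 i hi, hy.2 i hi]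
  refine (Submodule.finrank_mono hle).trans ?_
  rw [← Finset.coe_image]
  exact (finrank_span_finset_le_card _).trans
    (Finset.card_image_le.trans (by rw [Finset.card_compl, Fintype.card_fin]))

theorem finrank_vectorSpan_crossVerts_le (k : ℝ) (J : Finset (Fin d)) (σ : Fin d → ℝ) :
    finrank ℝ (vectorSpan ℝ (crossVerts k J σ)) ≤ J.card - 1 := by
  classical
  rcases J.eq_empty_or_nonempty with rfl | hJ
  · simp [crossVerts_eq_image]
  rw [crossVerts_eq_image, ← Finset.coe_image]
  exact finrank_vectorSpan_image_finset_le ℝ _ _ (Nat.succ_pred_eq_of_pos hJ.card_pos).symm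

theorem finrank_vectorSpan_cubeFace_union_crossVerts_le (k : ℝ) (I J : Finset (Fin d))
    (σ : Fin d → ℝ) :
    finrank ℝ (vectorSpan ℝ (cubeFace I σ ∪ crossVerts k J σ)) ≤ d - I.card + J.card := by
  classical
  rw [crossVerts_eq_image]
  exact (finrank_vectorSpan_union_image_le _ _ _).trans
    (Nat.add_le_add_right (finrank_vectorSpan_cubeFace_le I σ) _)

end Dimension

def facetHull (k : ℝ) (I J : Finset (Fin d)) (σ : Fin d → ℝ) : Set (EuclideanSpace ℝ (Fin d)) :=
  convexHull ℝ (cubeFace I σ ∪ crossVerts k J σ)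

theorem facetHull_congr {k : ℝ} {I J : Finset (Fin d)} (hJI : J ⊆ I) {σ σ' : Fin d → ℝ}
    (h : ∀ i ∈ I, σ i = σ' i) : facetHull k I J σ = facetHull k I J σ' := by
  have hcube : cubeFace I σ = cubeFace I σ' := by
    ext x
    exact and_congr_right fun _ => forall₂_congr fun i hi => by rw [h i hi]
  have hcross : crossVerts k J σ = crossVerts k J σ' := by
    simp only [crossVerts_eq_image]
    exact Set.image_congr fun i hi => by simp only [crossVert, h i (hJI hi)]
  rw [facetHull, facetHull, hcube, hcross]

def cubeFaceCenter (I : Finset (Fin d)) (σ : Fin d → ℝ) : EuclideanSpace ℝ (Fin d) :=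
  ∑ i ∈ I, σ i • EuclideanSpace.single i 1

section CubeFaceCenter

variable {I : Finset (Fin d)} {σ : Fin d → ℝ} (hσ : ∀ i ∈ I, |σ i| = 1)
include hσ

theorem cubeFaceCenter_mem : cubeFaceCenter I σ ∈ cubeFace I σ := by
  refine ⟨fun i => ?_, fun i hi => ?_⟩ <;> rw [cubeFaceCenter, sum_smul_single_apply]
  · split_ifs with hi
    exacts [(hσ i hi).le, abs_zero.trans_le zero_le_one]
  · exact if_pos hi

theorem cubeFaceCenter_add_single_mem {l : Fin d} (hl : l ∉ I) :
    cubeFaceCenter I σ + EuclideanSpace.single l 1 ∈ cubeFace I σ := by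
  refine ⟨fun i => ?_, fun i hi => ?_⟩ <;>
    simp only [cubeFaceCenter, PiLp.add_apply, sum_smul_single_apply, PiLp.single_apply]
  · by_cases hi : i ∈ I
    · simp [hi, ne_of_mem_of_not_mem hi hl, hσ i hi]
    · split_ifs <;> simp
  · simp [hi, ne_of_mem_of_not_mem hi hl]

end CubeFaceCenter

/-- The outer normal of `facetHull k (insert j J) J σ`: the weight `k - |J|` at `j` makes
`∑ |u_i| = k = k · max |u_i|`, so the cube face and the simplex both lie in the face it cuts out. -/
def facetNormal (k : ℝ) (J : Finset (Fin d)) (j : Fin d) (σ : Fin d → ℝ) :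
    EuclideanSpace ℝ (Fin d) :=
  ∑ i ∈ J, σ i • EuclideanSpace.single i 1 + ((k - J.card) * σ j) • EuclideanSpace.single j 1

section FacetNormal

variable {k : ℝ} {J : Finset (Fin d)} {j : Fin d} {σ : Fin d → ℝ}

theorem facetNormal_apply (hj : j ∉ J) (l : Fin d) :
    facetNormal k J j σ l = if l ∈ J then σ l else if l = j then (k - J.card) * σ j else 0 := by
  simp only [facetNormal, PiLp.add_apply, sum_smul_single_apply, PiLp.smul_apply,
    PiLp.single_apply, smul_eq_mul, mul_ite, mul_one, mul_zero]
  split_ifs with hl hlj <;> simp_all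

-- This expresses the centre of the cube face through the normal and the differences
-- `g - k σ_i e_i` of points of the facet; it is why the facet spans a hyperplane.
theorem smul_cubeFaceCenter_eq (hj : j ∉ J) :
    (J.card + (k - J.card) ^ 2 : ℝ) • cubeFaceCenter (insert j J) σ =
      k • facetNormal k J j σ +
        (1 - (k - J.card)) • ∑ i ∈ J, (cubeFaceCenter (insert j J) σ - crossVert k σ i) := by
  simp only [cubeFaceCenter, facetNormal, crossVert, Finset.sum_insert hj,
    Finset.sum_sub_distrib, Finset.sum_const, mul_smul, ← Finset.smul_sum,
    ← Nat.cast_smul_eq_nsmul ℝ]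
  module

variable (hj : j ∉ J) (hσ : ∀ i ∈ insert j J, |σ i| = 1) (hk : J.card < k)
  (hk' : k < J.card + 1)
include hj hσ hk

theorem abs_facetNormal_apply (l : Fin d) :
    |facetNormal k J j σ l| = if l ∈ J then 1 else if l = j then k - J.card else 0 := by
  rw [facetNormal_apply hj]
  split_ifs with hl hlj
  · exact hσ l (Finset.mem_insert_of_mem hl)
  · rw [abs_mul, hσ j (Finset.mem_insert_self j J), mul_one, abs_of_pos (sub_pos.2 hk)]
  · exact abs_zero

theorem facetNormal_ne_zero_iff (l : Fin d) : facetNormal k J j σ l ≠ 0 ↔ l ∈ insert j J := by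
  rw [← abs_ne_zero, abs_facetNormal_apply hj hσ hk, Finset.mem_insert]
  split_ifs with hl hlj
  · exact iff_of_true one_ne_zero (Or.inr hl)
  · exact iff_of_true (sub_pos.2 hk).ne' (Or.inl hlj)
  · simp [hl, hlj]

theorem facetNormal_ne_zero : facetNormal k J j σ ≠ 0 := fun h => by
  simpa [h] using facetNormal_ne_zero_iff hj hσ hk j

theorem facetNormal_eq_abs_mul (l : Fin d) :
    facetNormal k J j σ l = |facetNormal k J j σ l| * σ l := by
  rw [abs_facetNormal_apply hj hσ hk, facetNormal_apply hj]
  split_ifs with hl hlj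
  · rw [one_mul]
  · rw [hlj]
  · rw [zero_mul]

theorem sum_abs_facetNormal : ∑ l, |facetNormal k J j σ l| = k := by
  have hzero : ∀ l ∉ insert j J, |facetNormal k J j σ l| = 0 := fun l hl => by
    rw [abs_eq_zero, ← not_ne_iff, facetNormal_ne_zero_iff hj hσ hk]
    exact hl
  rw [← Finset.sum_subset (Finset.subset_univ _) fun l _ hl => hzero l hl, Finset.sum_insert hj,
    Finset.sum_congr rfl fun l hl => (abs_facetNormal_apply hj hσ hk l).trans (if_pos hl),
    abs_facetNormal_apply hj hσ hk, if_neg hj, if_pos rfl, Finset.sum_const, nsmul_one]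
  ring

include hk' in
theorem abs_facetNormal_le (l : Fin d) : |facetNormal k J j σ l| ≤ 1 := by
  rw [abs_facetNormal_apply hj hσ hk]
  split_ifs <;> linarith

include hk' in
theorem abs_facetNormal_eq_one_iff (l : Fin d) : |facetNormal k J j σ l| = 1 ↔ l ∈ J := by
  rw [abs_facetNormal_apply hj hσ hk]
  split_ifs with hl hlj
  · exact iff_of_true rfl hl
  · exact iff_of_false (by linarith) hl
  · exact iff_of_false zero_ne_one hl

end FacetNormal

section Forward

variable {k : ℝ} {J : Finset (Fin d)} {j : Fin d} {σ : Fin d → ℝ}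
  (hj : j ∉ J) (hσ : ∀ i ∈ insert j J, |σ i| = 1) (hk : J.card < k)
include hj hσ hk

theorem vectorSpan_sup_span_facetNormal :
    vectorSpan ℝ (cubeFace (insert j J) σ ∪ crossVerts k J σ) ⊔ ℝ ∙ facetNormal k J j σ = ⊤ := by
  set W := vectorSpan ℝ (cubeFace (insert j J) σ ∪ crossVerts k J σ) ⊔ ℝ ∙ facetNormal k J j σ
  set g := cubeFaceCenter (insert j J) σ
  have hσ0 : ∀ i ∈ insert j J, σ i ≠ 0 := fun i hi => abs_ne_zero.1 ((hσ i hi).trans_ne one_ne_zero)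
  have hsub : ∀ x ∈ cubeFace (insert j J) σ ∪ crossVerts k J σ,
      ∀ y ∈ cubeFace (insert j J) σ ∪ crossVerts k J σ, x - y ∈ W :=
    fun x hx y hy => Submodule.mem_sup_left (vsub_mem_vectorSpan ℝ hx hy)
  have hg : g ∈ cubeFace (insert j J) σ := cubeFaceCenter_mem hσ
  have hvert : ∀ i ∈ J, g - crossVert k σ i ∈ W :=
    fun i hi => hsub _ (Or.inl hg) _ (Or.inr ⟨i, hi, rfl⟩)
  have hgW : g ∈ W := by
    have hcoef : (J.card + (k - J.card) ^ 2 : ℝ) ≠ 0 := by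
      have := sub_pos.2 hk
      positivity
    refine (W.smul_mem_iff hcoef).1 ?_
    rw [smul_cubeFaceCenter_eq hj]
    exact W.add_mem (W.smul_mem _ (Submodule.mem_sup_right (Submodule.mem_span_singleton_self _)))
      (W.smul_mem _ (W.sum_mem hvert))
  have hJ : ∀ i ∈ J, EuclideanSpace.single i (1 : ℝ) ∈ W := fun i hi => by
    have : crossVert k σ i ∈ W := by simpa using W.sub_mem hgW (hvert i hi)
    exact (W.smul_mem_iff (mul_ne_zero ((Nat.cast_nonneg _).trans_lt hk).ne'
      (hσ0 i (Finset.mem_insert_of_mem hi)))).1 this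
  refine eq_top_of_forall_single_mem fun l => ?_
  by_cases hl : l ∈ insert j J
  · rcases Finset.mem_insert.1 hl with rfl | hl
    · refine (W.smul_mem_iff (hσ0 l hl)).1 ?_
      have := W.sub_mem hgW (W.sum_mem fun i hi => W.smul_mem (σ i) (hJ i hi))
      rwa [show g = σ l • EuclideanSpace.single l 1 + ∑ i ∈ J, σ i • EuclideanSpace.single i 1
        from Finset.sum_insert hj, add_sub_cancel_right] at this
    · exact hJ l hl
  · have := hsub (g + EuclideanSpace.single l 1) (Or.inl (cubeFaceCenter_add_single_mem hσ hl))
      g (Or.inl hg)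
    rwa [add_sub_cancel_left] at this

variable (hk' : k < J.card + 1)
include hk'

theorem facetHull_eq_setOf_inner_eq :
    facetHull k (insert j J) J σ = {x ∈ scaledRho d k | ⟪facetNormal k J j σ, x⟫ = k} := by
  have h := setOf_inner_eq_eq_convexHull ((Nat.cast_nonneg _).trans_lt hk) one_pos
    (abs_facetNormal_le hj hσ hk hk') (facetNormal_ne_zero_iff hj hσ hk)
    (facetNormal_eq_abs_mul hj hσ hk) (abs_facetNormal_eq_one_iff hj hσ hk hk')
    (by rw [sum_abs_facetNormal hj hσ hk, mul_one])
  rw [mul_one] at h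
  exact h.symm

theorem isExposed_facetHull : IsExposed ℝ (scaledRho d k) (facetHull k (insert j J) J σ) := by
  rw [facetHull_eq_setOf_inner_eq hj hσ hk hk']
  refine isExposed_setOf_inner_eq fun x hx => ?_
  simpa using inner_le_of_mem_scaledRho ((Nat.cast_nonneg _).trans_lt hk) zero_le_one
    (abs_facetNormal_le hj hσ hk hk') (sum_abs_facetNormal hj hσ hk).le (mul_one k).le hx

theorem vectorSpan_facetHull :
    vectorSpan ℝ (facetHull k (insert j J) J σ) = (ℝ ∙ facetNormal k J j σ)ᗮ := by
  have hle := vectorSpan_le_orthogonal_of_inner_eq (s := facetHull k (insert j J) J σ)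
    (by rw [facetHull_eq_setOf_inner_eq hj hσ hk hk']; exact fun x hx => hx.2)
  refine eq_of_le_of_inf_le_of_le_sup hle (z := ℝ ∙ facetNormal k J j σ) ?_ ?_
  · rw [inf_comm, Submodule.inf_orthogonal_eq_bot]
    exact bot_le
  · rw [facetHull, vectorSpan_convexHull, vectorSpan_sup_span_facetNormal hj hσ hk]
    exact le_top

theorem isFacet_facetHull : IsFacet (scaledRho d k) (facetHull k (insert j J) J σ) :=
  ⟨isExposed_facetHull hj hσ hk hk',
    ⟨_, subset_convexHull ℝ _ (Or.inl (cubeFaceCenter_mem hσ))⟩,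
    by rw [vectorSpan_facetHull hj hσ hk hk', finrank_orthogonal_span_singleton_eq
      (facetNormal_ne_zero hj hσ hk)]⟩

end Forward

section Backward

variable {k t M : ℝ} {u : EuclideanSpace ℝ (Fin d)} {I T : Finset (Fin d)} {σ : Fin d → ℝ}

theorem sum_abs_eq_card_mul_add (hI : ∀ i, u i ≠ 0 ↔ i ∈ I) (hT : ∀ i, |u i| = t ↔ i ∈ T)
    (hTI : T ⊆ I) : ∑ i, |u i| = T.card * t + ∑ i ∈ I \ T, |u i| := by
  rw [← Finset.sum_subset (Finset.subset_univ I) fun i _ hi => by simp [not_not.1 (mt (hI i).1 hi)],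
    ← Finset.sum_sdiff hTI, add_comm, Finset.sum_congr rfl fun i hi => (hT i).2 hi,
    Finset.sum_const, nsmul_eq_mul]

variable (hk : 0 < k) (ht0 : 0 < t) (ht : ∀ i, |u i| ≤ t) (hI : ∀ i, u i ≠ 0 ↔ i ∈ I)
  (hσ : ∀ i, u i = |u i| * σ i) (hT : ∀ i, |u i| = t ↔ i ∈ T)
  (hMcube : ∑ i, |u i| ≤ M) (hMcross : k * t ≤ M)
include hk ht0 ht hI hσ hT hMcube hMcross

theorem finrank_vectorSpan_setOf_inner_eq_le_of_sum_abs_ne (hM : ∑ i, |u i| ≠ M) :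
    finrank ℝ (vectorSpan ℝ {x ∈ scaledRho d k | ⟪u, x⟫ = M}) ≤ T.card - 1 := by
  have hsub := setOf_inner_eq_subset_convexHull hk ht0 ht hI hσ hT hMcube hMcross
  simp only [hM, false_and, Set.ofPred_false, Set.empty_union] at hsub
  refine (Submodule.finrank_mono (vectorSpan_mono ℝ hsub)).trans ?_
  rw [vectorSpan_convexHull]
  refine (Submodule.finrank_mono (vectorSpan_mono ℝ fun a ha => ha.2)).trans ?_
  rw [vectorSpan_convexHull]
  exact finrank_vectorSpan_crossVerts_le k T σ

theorem finrank_vectorSpan_setOf_inner_eq_le_of_mul_ne (hM : k * t ≠ M) :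
    finrank ℝ (vectorSpan ℝ {x ∈ scaledRho d k | ⟪u, x⟫ = M}) ≤ d - I.card := by
  have hsub := setOf_inner_eq_subset_convexHull hk ht0 ht hI hσ hT hMcube hMcross
  simp only [hM, false_and, Set.ofPred_false, Set.union_empty] at hsub
  refine (Submodule.finrank_mono (vectorSpan_mono ℝ hsub)).trans ?_
  rw [vectorSpan_convexHull]
  exact (Submodule.finrank_mono (vectorSpan_mono ℝ fun a ha => ha.2)).trans
    (finrank_vectorSpan_cubeFace_le I σ)

variable (hTI : T ⊆ I) (hTne : T.Nonempty) (hMle : M ≤ max (∑ i, |u i|) (k * t))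
  (hrank : finrank ℝ (vectorSpan ℝ {x ∈ scaledRho d k | ⟪u, x⟫ = M}) = d - 1)
include hTI hTne hMle hrank

theorem sum_abs_eq_of_finrank_eq (hkd : k < d) : ∑ i, |u i| = M := by
  by_contra hM
  have hdim := finrank_vectorSpan_setOf_inner_eq_le_of_sum_abs_ne hk ht0 ht hI hσ hT hMcube
    hMcross hM
  rw [hrank] at hdim
  have hTd : (T.card : ℝ) = d := by
    have := T.card_le_univ
    rw [Fintype.card_fin] at this
    have := hTne.card_pos
    have : T.card = d := by omega
    exact_mod_cast this
  have hMk : M ≤ k * t := (le_max_iff.1 hMle).resolve_left (not_le.2 (hMcube.lt_of_ne hM))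
  have hrest : 0 ≤ ∑ i ∈ I \ T, |u i| := Finset.sum_nonneg fun i _ => abs_nonneg _
  have := sum_abs_eq_card_mul_add hI hT hTI
  rw [hTd] at this
  nlinarith

theorem mul_eq_of_finrank_eq (hk1 : 1 < k) : k * t = M := by
  by_contra hM
  have hdim := finrank_vectorSpan_setOf_inner_eq_le_of_mul_ne hk ht0 ht hI hσ hT hMcube
    hMcross hM
  rw [hrank] at hdim
  have hTI' := Finset.card_le_card hTI
  have hId := I.card_le_univ
  rw [Fintype.card_fin] at hId
  have hT1 : T.card = 1 := by
    have := hTne.card_pos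
    omega
  have hIT : I = T := (Finset.eq_of_subset_of_card_le hTI (by omega)).symm
  have hsum := sum_abs_eq_card_mul_add hI hT hTI
  rw [hIT, Finset.sdiff_self, Finset.sum_empty, add_zero, hT1, Nat.cast_one, one_mul] at hsum
  have hMk : M ≤ k * t := hMle.trans (max_le (by rw [hsum]; nlinarith) le_rfl)
  exact hM (le_antisymm hMcross hMk)

theorem exists_insert_eq_of_finrank_eq (hkd : k < d) (hk1 : 1 < k)
    (hkint : ∀ n : ℕ, (n : ℝ) ≠ k) :
    ∃ j ∉ T, I = insert j T ∧ (T.card : ℝ) < k ∧ k < T.card + 1 ∧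
      {x ∈ scaledRho d k | ⟪u, x⟫ = M} = facetHull k I T σ := by
  have hcube := sum_abs_eq_of_finrank_eq hk ht0 ht hI hσ hT hMcube hMcross hTI hTne hMle hrank hkd
  have hcross := mul_eq_of_finrank_eq hk ht0 ht hI hσ hT hMcube hMcross hTI hTne hMle hrank hk1
  have hface := setOf_inner_eq_eq_convexHull hk ht0 ht hI hσ hT (hcube.trans hcross.symm)
  rw [← hcross, hface, vectorSpan_convexHull] at hrank
  have hdim := finrank_vectorSpan_cubeFace_union_crossVerts_le k I T σ
  rw [hrank] at hdim
  have hsum := sum_abs_eq_card_mul_add hI hT hTI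
  rw [hcube, ← hcross] at hsum
  obtain ⟨j, hj⟩ : (I \ T).Nonempty := by
    refine Finset.nonempty_iff_ne_empty.2 fun h => hkint T.card ?_
    rw [h, Finset.sum_empty, add_zero] at hsum
    exact (mul_right_cancel₀ ht0.ne' hsum).symm
  obtain ⟨hjI, hjT⟩ := Finset.mem_sdiff.1 hj
  have hIT : I \ T = {j} := by
    refine Finset.eq_singleton_iff_unique_mem.2 ⟨hj, fun i hi => ?_⟩
    have := I.card_le_univ
    rw [Fintype.card_fin] at this
    have : (I \ T).card ≤ 1 := by
      rw [Finset.card_sdiff_of_subset hTI]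
      omega
    exact Finset.card_le_one.1 this i hi j hj
  have huj : 0 < |u j| := abs_pos.2 ((hI j).2 hjI)
  have huj' : |u j| < t := (ht j).lt_of_ne (mt (hT j).1 hjT)
  rw [hIT, Finset.sum_singleton] at hsum
  refine ⟨j, hjT, ?_, by nlinarith, by nlinarith, hcross ▸ hface⟩
  rw [← Finset.union_sdiff_of_subset hTI, hIT, Finset.insert_eq, Finset.union_comm]

end Backward

theorem exists_eq_facetHull_of_isFacet {k : ℝ} (hk : 1 < k) (hkd : k < d)
    (hkint : ∀ n : ℕ, (n : ℝ) ≠ k) {F : Set (EuclideanSpace ℝ (Fin d))}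
    (hF : IsFacet (scaledRho d k) F) :
    ∃ (J : Finset (Fin d)) (j : Fin d) (σ : Fin d → ℝ), j ∉ J ∧ (∀ i ∈ insert j J, |σ i| = 1) ∧
      (J.card : ℝ) < k ∧ k < J.card + 1 ∧ F = facetHull k (insert j J) J σ := by
  classical
  have hk0 : 0 < k := one_pos.trans hk
  have hd : 0 < d := Nat.cast_pos.1 (hk0.trans hkd)
  obtain ⟨u, hu, M, hle, rfl⟩ := hF.exists_eq_setOf_inner_eq (vectorSpan_scaledRho k)
    (by simpa using hd)
  have : Nonempty (Fin d) := ⟨⟨0, hd⟩⟩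
  obtain ⟨i₀, hi₀⟩ := Finite.exists_max fun i => |u i|
  set I := Finset.univ.filter fun i => u i ≠ 0
  set T := Finset.univ.filter fun i => |u i| = |u i₀|
  set σ : Fin d → ℝ := fun i => SignType.sign (u i)
  have ht0 : 0 < |u i₀| := by
    obtain ⟨i, hi⟩ : ∃ i, u i ≠ 0 := by
      by_contra! h
      exact hu (by ext i; simp [h])
    exact (abs_pos.2 hi).trans_le (hi₀ i)
  have hI : ∀ i, u i ≠ 0 ↔ i ∈ I := by simp [I]
  have hT : ∀ i, |u i| = |u i₀| ↔ i ∈ T := by simp [T]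
  have hσ : ∀ i, u i = |u i| * σ i := fun i => (abs_mul_sign (u i)).symm
  have hσI : ∀ i ∈ I, |σ i| = 1 := fun i hi =>
    abs_eq_one_of_eq_abs_mul ((hI i).2 hi) (hσ i)
  have hMcube : ∑ i, |u i| ≤ M := by
    have hcube : WithLp.toLp 2 σ ∈ hcube d := fun i => by
      rcases lt_trichotomy (u i) 0 with h | h | h <;> simp [σ, sign_neg, sign_pos, h]
    refine le_of_eq_of_le ?_ (hle _ (subset_convexHull ℝ _ (Or.inr hcube)))
    simp [inner_eq_sum, σ, self_mul_sign]
  have hMcross : k * |u i₀| ≤ M := by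
    refine le_of_eq_of_le ?_ (hle _ (subset_convexHull ℝ _
      (Or.inl (crossVert_mem_smul_cross hk0 (hσI i₀ ((hI i₀).1 (abs_pos.1 ht0)))))))
    rw [inner_crossVert, mul_assoc, show σ i₀ * u i₀ = |u i₀| from sign_mul_self _]
  have hMle : M ≤ max (∑ i, |u i|) (k * |u i₀|) := by
    obtain ⟨x, hx, rfl⟩ := hF.2.1
    exact inner_le_of_mem_scaledRho hk0 ht0.le hi₀ (le_max_left _ _) (le_max_right _ _) hx
  have hTI : T ⊆ I := fun i hi => (hI i).1 (abs_pos.1 (((hT i).2 hi).symm ▸ ht0))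
  obtain ⟨j, hjT, hIT, hTk, hkT, hF⟩ := exists_insert_eq_of_finrank_eq hk0 ht0 hi₀ hI hσ hT
    hMcube hMcross hTI ⟨i₀, (hT i₀).1 rfl⟩ hMle (isFacet_iff.1 hF).2.2 hkd hk hkint
  exact ⟨T, j, σ, hjT, hIT ▸ hσI, hTk, hkT, hIT ▸ hF⟩

section Uniqueness

variable {k : ℝ} {J J₂ : Finset (Fin d)} {j j₂ : Fin d} {σ σ₂ : Fin d → ℝ}
  (hj : j ∉ J) (hσ : ∀ i ∈ insert j J, |σ i| = 1) (hk : J.card < k) (hk' : k < J.card + 1)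
  (hj₂ : j₂ ∉ J₂) (hσ₂ : ∀ i ∈ insert j₂ J₂, |σ₂ i| = 1) (hk₂ : J₂.card < k)
  (hk₂' : k < J₂.card + 1)
include hj hσ hk hk' hj₂ hσ₂ hk₂ hk₂'

theorem facetNormal_eq_of_facetHull_eq
    (h : facetHull k (insert j J) J σ = facetHull k (insert j₂ J₂) J₂ σ₂) :
    facetNormal k J j σ = facetNormal k J₂ j₂ σ₂ := by
  obtain ⟨x, hx⟩ := (isFacet_facetHull hj hσ hk hk').2.1
  have hx₂ := h ▸ hx
  rw [facetHull_eq_setOf_inner_eq hj hσ hk hk'] at hx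
  rw [facetHull_eq_setOf_inner_eq hj₂ hσ₂ hk₂ hk₂'] at hx₂
  refine eq_of_orthogonal_span_singleton_eq ?_ ((Nat.cast_nonneg _).trans_lt hk).ne' hx.2 hx₂.2
  rw [← vectorSpan_facetHull hj hσ hk hk', ← vectorSpan_facetHull hj₂ hσ₂ hk₂ hk₂', h]

theorem eq_of_facetNormal_eq (h : facetNormal k J j σ = facetNormal k J₂ j₂ σ₂) :
    J = J₂ ∧ j = j₂ ∧ ∀ i ∈ insert j J, σ i = σ₂ i := by
  have hJ : J = J₂ := by
    ext i
    rw [← abs_facetNormal_eq_one_iff hj hσ hk hk', ← abs_facetNormal_eq_one_iff hj₂ hσ₂ hk₂ hk₂',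
      h]
  subst hJ
  have hI : ∀ i, i ∈ insert j J ↔ i ∈ insert j₂ J := fun i => by
    rw [← facetNormal_ne_zero_iff hj hσ hk, ← facetNormal_ne_zero_iff hj₂ hσ₂ hk₂, h]
  refine ⟨rfl, ?_, fun i hi => ?_⟩
  · simpa [hj] using (hI j).1 (Finset.mem_insert_self j J)
  · have h₁ := facetNormal_eq_abs_mul hj hσ hk i
    have h₂ := facetNormal_eq_abs_mul hj₂ hσ₂ hk₂ i
    rw [← h] at h₂
    have hne : |facetNormal k J j σ i| ≠ 0 :=
      abs_ne_zero.2 ((facetNormal_ne_zero_iff hj hσ hk i).2 hi)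
    exact mul_left_cancel₀ hne (h₁.symm.trans h₂)

theorem eq_of_facetHull_eq
    (h : facetHull k (insert j J) J σ = facetHull k (insert j₂ J₂) J₂ σ₂) :
    J = J₂ ∧ j = j₂ ∧ ∀ i ∈ insert j J, σ i = σ₂ i :=
  eq_of_facetNormal_eq hj hσ hk hk' hj₂ hσ₂ hk₂ hk₂'
    (facetNormal_eq_of_facetHull_eq hj hσ hk hk' hj₂ hσ₂ hk₂ hk₂' h)

end Uniqueness

theorem floor_eq_iff_of_forall_ne {k : ℝ} (hk : 0 ≤ k) (hkint : ∀ n : ℕ, (n : ℝ) ≠ k) (n : ℕ) :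
    ⌊k⌋₊ = n ↔ (n : ℝ) < k ∧ k < n + 1 := by
  rw [Nat.floor_eq_iff hk]
  exact and_congr_left fun _ => ⟨fun h => h.lt_of_ne (hkint n), le_of_lt⟩

theorem isFacet_scaledRho_iff {k : ℝ} (hk : 1 < k) (hkd : k < d) (hkint : ∀ n : ℕ, (n : ℝ) ≠ k)
    {F : Set (EuclideanSpace ℝ (Fin d))} :
    IsFacet (scaledRho d k) F ↔ ∃ (J : Finset (Fin d)) (j : Fin d) (σ : Fin d → ℝ), j ∉ J ∧
      (∀ i ∈ insert j J, |σ i| = 1) ∧ J.card = ⌊k⌋₊ ∧ F = facetHull k (insert j J) J σ := by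
  have hfloor := floor_eq_iff_of_forall_ne (one_pos.trans hk).le hkint
  constructor
  · intro hF
    obtain ⟨J, j, σ, hj, hσ, hJk, hkJ, rfl⟩ := exists_eq_facetHull_of_isFacet hk hkd hkint hF
    exact ⟨J, j, σ, hj, hσ, ((hfloor _).2 ⟨hJk, hkJ⟩).symm, rfl⟩
  · rintro ⟨J, j, σ, hj, hσ, hJ, rfl⟩
    obtain ⟨hJk, hkJ⟩ := (hfloor _).1 hJ.symm
    exact isFacet_facetHull hj hσ hJk hkJ

def signs (s : Finset (Fin d)) (i : Fin d) : ℝ := if i ∈ s then 1 else -1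

theorem abs_signs (s : Finset (Fin d)) (i : Fin d) : |signs s i| = 1 := by
  unfold signs
  split_ifs <;> simp

theorem signs_eq_one_iff {s : Finset (Fin d)} {i : Fin d} : signs s i = 1 ↔ i ∈ s := by
  unfold signs
  split_ifs with h <;> norm_num [h]

/-- Facets are indexed by `I` (the coordinates fixed on the cube part), the coordinate `j ∈ I`
missing from the simplex part, and the set `s ⊆ I` of coordinates with sign `+1`. -/
def facetIndex (d n : ℕ) : Finset (Σ _ : Finset (Fin d), Fin d × Finset (Fin d)) :=
  (Finset.univ.powersetCard (n + 1)).sigma fun I => I ×ˢ I.powerset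

def facetOfIndex (k : ℝ) (q : Σ _ : Finset (Fin d), Fin d × Finset (Fin d)) :
    Set (EuclideanSpace ℝ (Fin d)) :=
  facetHull k q.1 (q.1.erase q.2.1) (signs q.2.2)

theorem card_facetIndex (n : ℕ) :
    (facetIndex d n).card = 2 ^ (n + 1) * d.choose (n + 1) * (n + 1) := by
  rw [facetIndex, Finset.card_sigma, Finset.sum_congr rfl fun I hI => by
    rw [Finset.card_product, Finset.card_powerset, (Finset.mem_powersetCard.1 hI).2],
    Finset.sum_const, Finset.card_powersetCard, Finset.card_univ, Fintype.card_fin, smul_eq_mul]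
  ring

theorem setOf_isFacet_scaledRho_eq_image {k : ℝ} (hk : 1 < k) (hkd : k < d)
    (hkint : ∀ n : ℕ, (n : ℝ) ≠ k) :
    {F | IsFacet (scaledRho d k) F} = facetOfIndex k '' facetIndex d ⌊k⌋₊ := by
  ext F
  simp only [Set.mem_ofPred_eq, isFacet_scaledRho_iff hk hkd hkint, Set.mem_image,
    Finset.mem_coe, facetIndex, Finset.mem_sigma, Finset.mem_powersetCard, Finset.mem_product,
    Finset.mem_powerset, Finset.subset_univ, true_and, Sigma.exists, Prod.exists, facetOfIndex]
  constructor
  · rintro ⟨J, j, σ, hj, hσ, hJ, rfl⟩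
    refine ⟨insert j J, j, (insert j J).filter (σ · = 1), ⟨?_, Finset.mem_insert_self j J,
      Finset.filter_subset _ _⟩, ?_⟩
    · rw [Finset.card_insert_of_notMem hj, hJ]
    · rw [Finset.erase_insert hj]
      refine facetHull_congr (Finset.subset_insert j J) fun i hi => ?_
      rcases (abs_eq zero_le_one).1 (hσ i hi) with h | h <;> norm_num [signs, hi, h]
  · rintro ⟨I, j, s, ⟨hI, hj, -⟩, rfl⟩
    refine ⟨I.erase j, j, signs s, Finset.notMem_erase j I, fun i _ => abs_signs s i, ?_, ?_⟩
    · rw [Finset.card_erase_of_mem hj, hI, Nat.add_sub_cancel]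
    · rw [Finset.insert_erase hj]

theorem injOn_facetOfIndex {k : ℝ} (hk : 0 ≤ k) (hkint : ∀ n : ℕ, (n : ℝ) ≠ k) :
    Set.InjOn (facetOfIndex (d := d) k) (facetIndex d ⌊k⌋₊) := by
  obtain ⟨hk₁, hk₂⟩ := (floor_eq_iff_of_forall_ne hk hkint _).1 rfl
  rintro ⟨I, j, s⟩ hq ⟨I', j', s'⟩ hq' h
  simp only [facetIndex, Finset.coe_sigma, Set.mem_sigma_iff, Finset.mem_coe,
    Finset.mem_powersetCard, Finset.coe_product, Set.mem_prod, Finset.mem_powerset] at hq hq'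
  obtain ⟨⟨-, hI⟩, hj, hs⟩ := hq
  obtain ⟨⟨-, hI'⟩, hj', hs'⟩ := hq'
  have hJ : ((I.erase j).card : ℝ) = ⌊k⌋₊ := by rw [Finset.card_erase_of_mem hj, hI]; simp
  have hJ' : ((I'.erase j').card : ℝ) = ⌊k⌋₊ := by rw [Finset.card_erase_of_mem hj', hI']; simp
  replace h : facetHull k (insert j (I.erase j)) (I.erase j) (signs s) =
      facetHull k (insert j' (I'.erase j')) (I'.erase j') (signs s') := by
    rwa [Finset.insert_erase hj, Finset.insert_erase hj']
  obtain ⟨hJJ', rfl, hσ⟩ := eq_of_facetHull_eq (Finset.notMem_erase j I)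
    (fun i _ => abs_signs s i) (hJ ▸ hk₁) (hJ ▸ hk₂) (Finset.notMem_erase j' I')
    (fun i _ => abs_signs s' i) (hJ' ▸ hk₁) (hJ' ▸ hk₂) h
  have hII' : I = I' := by rw [← Finset.insert_erase hj, hJJ', Finset.insert_erase hj']
  subst hII'
  rw [Finset.insert_erase hj] at hσ
  have hss' : s = s' := by
    ext i
    by_cases hi : i ∈ I
    · rw [← signs_eq_one_iff, ← signs_eq_one_iff, hσ i hi]
    · exact iff_of_false (fun h => hi (hs h)) fun h => hi (hs' h)
  rw [hss']

end Rho

theorem facets_of_rho_nonint_general (d : ℕ) (k : ℝ) (hk1 : 1 < k) (hkd : k < d)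
    (hknotint : ¬ ∃ m : ℤ, (m : ℝ) = k) :
    {F : Set (EuclideanSpace ℝ (Fin d)) | IsExposed ℝ (rho d k) F ∧ F.Nonempty ∧
        Module.finrank ℝ (vectorSpan ℝ F) = d - 1}.ncard =
      2 ^ (⌊k⌋₊ + 1) * d.choose (⌊k⌋₊ + 1) * (⌊k⌋₊ + 1) ∧
    ∀ F : Set (EuclideanSpace ℝ (Fin d)),
      (IsExposed ℝ (k • rho d k) F ∧ F.Nonempty ∧
          Module.finrank ℝ (vectorSpan ℝ F) = d - 1) ↔
        ∃ (I J : Finset (Fin d)) (σ : Fin d → ℝ), I.card = ⌊k⌋₊ + 1 ∧ J ⊆ I ∧ J.card = ⌊k⌋₊ ∧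
          (∀ i ∈ I, σ i = 1 ∨ σ i = -1) ∧
          F = convexHull ℝ
            ({x ∈ hcube d | ∀ i ∈ I, x i = σ i} ∪
              {p | ∃ i ∈ J, p = (k * σ i) • EuclideanSpace.single i (1 : ℝ)}) := by
  have hk0 : 0 < k := one_pos.trans hk1
  have hkint : ∀ n : ℕ, (n : ℝ) ≠ k := fun n hn => hknotint ⟨n, by exact_mod_cast hn⟩
  simp only [← Rho.isFacet_iff]
  refine ⟨?_, fun F => ?_⟩
  · rw [← (MulAction.injective₀ hk0.ne').injOn.ncard_image, ← setOf_isFacet_smul_set _ hk0,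
      Rho.smul_rho hk0.ne', Rho.setOf_isFacet_scaledRho_eq_image hk1 hkd hkint,
      (Rho.injOn_facetOfIndex hk0.le hkint).ncard_image, Set.ncard_coe_finset,
      Rho.card_facetIndex]
  · rw [Rho.smul_rho hk0.ne', Rho.isFacet_scaledRho_iff hk1 hkd hkint]
    constructor
    · rintro ⟨J, j, σ, hj, hσ, hJ, rfl⟩
      exact ⟨insert j J, J, σ, by rw [Finset.card_insert_of_notMem hj, hJ],
        Finset.subset_insert j J, hJ, fun i hi => (abs_eq zero_le_one).1 (hσ i hi), rfl⟩
    · rintro ⟨I, J, σ, hI, hJI, hJ, hσ, rfl⟩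
      obtain ⟨j, hj, rfl⟩ := Finset.exists_eq_insert_iff.2 ⟨hJI, by rw [hI, hJ]⟩
      exact ⟨J, j, σ, hj, fun i hi => (abs_eq zero_le_one).2 (hσ i hi), hJ, rfl⟩

/-- For non-integer `k` with `1 < k < d`, the polytope `ρ_{d,k}` has
`2^{⌊k⌋+1} · binom(d,⌊k⌋+1) · (⌊k⌋+1)` facets; more precisely, the facets of `k·ρ_{d,k}`
are exactly the convex hulls of a `(d-⌊k⌋-1)`-dimensional face `G` of `γ_d` with a simplex
whose vertices are any `⌊k⌋` of the `⌊k⌋+1` points `k σ_i e_i` pulled from the centers of the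
facets of `γ_d` incident to `G`. -/
theorem facets_of_rho_nonint (d : ℕ) (hd : 1 ≤ d) (k : ℝ) (hk1 : 1 < k) (hkd : k < d)
    (hknotint : ¬ ∃ m : ℤ, (m : ℝ) = k) :
    {F : Set (EuclideanSpace ℝ (Fin d)) | IsExposed ℝ (rho d k) F ∧ F.Nonempty ∧
        Module.finrank ℝ (vectorSpan ℝ F) = d - 1}.ncard =
      2 ^ (⌊k⌋₊ + 1) * d.choose (⌊k⌋₊ + 1) * (⌊k⌋₊ + 1) ∧
    ∀ F : Set (EuclideanSpace ℝ (Fin d)),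
      (IsExposed ℝ (k • rho d k) F ∧ F.Nonempty ∧
          Module.finrank ℝ (vectorSpan ℝ F) = d - 1) ↔
        ∃ (I J : Finset (Fin d)) (σ : Fin d → ℝ), I.card = ⌊k⌋₊ + 1 ∧ J ⊆ I ∧ J.card = ⌊k⌋₊ ∧
          (∀ i ∈ I, σ i = 1 ∨ σ i = -1) ∧
          F = convexHull ℝ
            ({x ∈ hcube d | ∀ i ∈ I, x i = σ i} ∪
              {p | ∃ i ∈ J, p = (k * σ i) • EuclideanSpace.single i (1 : ℝ)}) :=
  facets_of_rho_nonint_general d k hk1 hkd hknotint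
end
end

section
/- Let d ≥ 1 and let k be a real number with 1 ≤ k ≤ d. If k > 1, then for every integer i with 0 ≤ i < d−k the polytopes ρ_{d,k} and γ_d/k have exactly 2^{d−i}·binom(d,i) common i-dimensional exposed faces, and they share no i-dimensional face when d−k ≤ i < d. If k < d, then for every integer i with 0 ≤ i < k−1 the polytopes ρ_{d,k} and β_d have exactly 2^{i+1}·binom(d,i+1) common i-dimensional exposed faces, and they share no i-dimensional face when k−1 ≤ i < d. -/
/-
The nonempty exposed faces of `γ_d / k` and of `β_d` are indexed by sign vectors
`σ ∈ {-1, 0, 1}^d`, with support of size `m` say: the face of `γ_d / k` on which the coordinates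
in the support equal `σ j / k` (of dimension `d - m`), and the face of `β_d` spanned by the
vertices `σ j • e j` (of dimension `m - 1`, for `σ ≠ 0`). As `ρ_{d,k}` is the convex hull of
`β_d ∪ γ_d / k`, and `⟪σ, ·⟫` has maximum `1` on `β_d` and `m / k` on `γ_d / k`, attained on the
faces of `σ`, the cube face is a face of `ρ_{d,k}` if `k < m` and the cross face if `m < k`.
Conversely, for `k > 1` an exposed face of `ρ_{d,k}` inside `γ_d / k` cannot meet `β_d`, since it
would contain a maximising vertex `± e j` of `β_d`, which lies outside `γ_d / k`; so the centre
`σ / k` of the face lies outside `β_d`, i.e. `k < m`. Symmetrically, for `k < d` a face inside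
`β_d` cannot meet `γ_d / k`, whose maximising vertices have `ℓ¹`-norm `d / k > 1`; so the
barycentre `σ / m` lies outside `γ_d / k`, i.e. `m < k`. Finally, `binom(d, m) 2^m` sign vectors
have support of size `m`.
-/
open scoped Pointwise

noncomputable section

open scoped RealInnerProductSpace Finset

namespace ContinuousLinearMap

variable {E : Type*} [AddCommGroup E] [Module ℝ E] [TopologicalSpace E] (l : StrongDual ℝ E)
  {A B F : Set E}

theorem toExposed_eq {M : ℝ} (hFA : F ⊆ A) (hF : F.Nonempty) (hle : ∀ y ∈ A, l y ≤ M)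
    (hmax : ∀ x ∈ A, l x = M ↔ x ∈ F) : l.toExposed A = F := by
  obtain ⟨x₀, hx₀⟩ := hF
  have hx₀M := (hmax x₀ (hFA hx₀)).2 hx₀
  ext x
  refine ⟨fun ⟨hx, hx_max⟩ => (hmax x hx).1 ((hle x hx).antisymm ?_), fun hx => ⟨hFA hx, ?_⟩⟩
  · exact hx₀M ▸ hx_max x₀ (hFA hx₀)
  · exact fun y hy => ((hmax x (hFA hx)).2 hx).symm ▸ hle y hy

theorem toExposed_union_of_lt {b : E} (hb : b ∈ B) (hlt : ∀ a ∈ A, l a < l b) :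
    l.toExposed (A ∪ B) = l.toExposed B := by
  ext x
  constructor
  · rintro ⟨hx | hx, hx_max⟩
    · exact absurd (hx_max b (.inr hb)) (hlt x hx).not_ge
    · exact ⟨hx, fun y hy => hx_max y (.inr hy)⟩
  · rintro ⟨hx, hx_max⟩
    refine ⟨.inr hx, ?_⟩
    rintro y (hy | hy)
    exacts [(hlt y hy).le.trans (hx_max b hb), hx_max y hy]

theorem toExposed_convexHull : l.toExposed (convexHull ℝ A) = convexHull ℝ (l.toExposed A) := by
  classical
  refine Set.Subset.antisymm ?_ <| convexHull_min ?_ <|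
    ContinuousLinearMap.toExposed.isExposed.convex (convex_convexHull ℝ A)
  · rintro x ⟨hx, hx_max⟩
    rw [convexHull_eq] at hx
    obtain ⟨ι, t, w, z, hw₀, hw₁, hz, rfl⟩ := hx
    have hle : ∀ i ∈ t, w i * l (z i) ≤ w i * l (t.centerMass w z) := fun i hi =>
      mul_le_mul_of_nonneg_left (hx_max _ (subset_convexHull ℝ A (hz i hi))) (hw₀ i hi)
    have hmean : ∑ i ∈ t, w i * l (z i) = ∑ i ∈ t, w i * l (t.centerMass w z) := by
      rw [← Finset.sum_mul, hw₁, one_mul, t.centerMass_eq_of_sum_1 z hw₁, map_sum]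
      simp
    -- a mean of values bounded by the maximum attains it only if every value with weight does
    have heq := (Finset.sum_eq_sum_iff_of_le hle).1 hmean
    rw [← t.centerMass_filter_ne_zero]
    refine t.filter _ |>.centerMass_mem_convexHull (fun i hi => hw₀ i (Finset.mem_filter.1 hi).1)
      (by rw [Finset.sum_filter_ne_zero, hw₁]; exact one_pos) fun i hi => ?_
    obtain ⟨hi, hwi⟩ := Finset.mem_filter.1 hi
    refine ⟨hz i hi, fun y hy => ?_⟩
    rw [mul_left_cancel₀ hwi (heq i hi)]
    exact hx_max y (subset_convexHull ℝ A hy)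
  · rintro a ⟨ha, ha_max⟩
    exact ⟨subset_convexHull ℝ A ha, fun y hy =>
      convexHull_min ha_max (convex_halfSpace_le l.toLinearMap.isLinear (l a)) hy⟩

end ContinuousLinearMap

theorem IsExposed.exists_eq_toExposed_innerSL {E : Type*} [NormedAddCommGroup E]
    [InnerProductSpace ℝ E] [CompleteSpace E] {A F : Set E} (h : IsExposed ℝ A F)
    (hF : F.Nonempty) : ∃ w : E, F = (innerSL ℝ w).toExposed A := by
  obtain ⟨l, rfl⟩ := h hF
  refine ⟨(InnerProductSpace.toDual ℝ E).symm l, ?_⟩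
  congr 1
  ext x
  simp

namespace SignType

theorem abs_coe_le_one (s : SignType) : |(s : ℝ)| ≤ 1 := by
  cases s <;> simp

theorem abs_coe_eq_one {s : SignType} (hs : s ≠ 0) : |(s : ℝ)| = 1 := by
  cases s <;> simp_all

theorem coe_mul_self (s : SignType) : (s : ℝ) * s = |(s : ℝ)| := by
  cases s <;> simp

theorem sign_coe (s : SignType) : SignType.sign (s : ℝ) = s := by
  cases s <;> simp

theorem coe_injective : Function.Injective ((↑) : SignType → ℝ) := by
  intro s t
  cases s <;> cases t <;> norm_num

end SignType

theorem mul_le_abs_mul_of_abs_le {a x r : ℝ} (hx : |x| ≤ r) : a * x ≤ r * |a| :=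
  (le_abs_self _).trans <| by
    rw [abs_mul, mul_comm r]; exact mul_le_mul_of_nonneg_left hx (abs_nonneg a)

theorem mul_eq_mul_abs_iff (a x r : ℝ) :
    a * x = r * |a| ↔ (a ≠ 0 → x = r * SignType.sign a) := by
  rcases lt_trichotomy a 0 with h | rfl | h
  · rw [sign_neg h, abs_of_neg h, show r * -a = a * -r by ring, mul_right_inj' h.ne]
    simp [h.ne]
  · simp
  · rw [sign_pos h, abs_of_pos h, mul_comm r, mul_right_inj' h.ne']
    simp [h.ne']

theorem abs_mul_add_mul_le {a b s t : ℝ} (ha : 0 ≤ a) (hb : 0 ≤ b) :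
    |a * s + b * t| ≤ a * |s| + b * |t| :=
  (abs_add_le _ _).trans_eq <| by rw [abs_mul, abs_mul, abs_of_nonneg ha, abs_of_nonneg hb]

theorem funext_of_ne_zero {ι M : Type*} [Zero M] {f g : ι → M} (h₁ : ∀ i, g i ≠ 0 → f i = g i)
    (h₂ : ∀ i, f i ≠ 0 → g i = f i) : f = g := by
  funext i
  by_cases hg : g i = 0
  · by_cases hf : f i = 0
    · rw [hf, hg]
    · exact (h₂ i hf).symm
  · exact h₁ i hg

variable {d : ℕ}

theorem inner_eq_sum_mul (w x : EuclideanSpace ℝ (Fin d)) : ⟪w, x⟫ = ∑ j, w j * x j := by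
  simp [PiLp.inner_apply, mul_comm]

section SignVectors

def signSupport (σ : Fin d → SignType) : Finset (Fin d) := {j | σ j ≠ 0}

theorem sum_abs_coe_eq_card (σ : Fin d → SignType) :
    ∑ j, |(σ j : ℝ)| = #(signSupport σ) := by
  rw [signSupport, Finset.card_filter, Nat.cast_sum]
  refine Finset.sum_congr rfl fun j _ => ?_
  cases σ j <;> simp

theorem card_signSupport_pos {σ : Fin d → SignType} (hσ : σ ≠ 0) : 0 < #(signSupport σ) := by
  obtain ⟨j, hj⟩ := Function.ne_iff.1 hσ
  exact Finset.card_pos.2 ⟨j, Finset.mem_filter.2 ⟨Finset.mem_univ j, hj⟩⟩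

theorem card_filter_card_signSupport_eq (d m : ℕ) :
    #{σ : Fin d → SignType | #(signSupport σ) = m} = d.choose m * 2 ^ m := by
  classical
  have hfiber (S : Finset (Fin d)) : #{σ : Fin d → SignType | signSupport σ = S} = 2 ^ #S := by
    have : ({σ | signSupport σ = S} : Finset (Fin d → SignType)) =
        Fintype.piFinset fun j => if j ∈ S then {-1, 1} else {0} := by
      ext σ
      simp only [Finset.mem_filter, Finset.mem_univ, true_and, Fintype.mem_piFinset,
        Finset.ext_iff, signSupport]
      refine forall_congr' fun j => ?_
      by_cases hj : j ∈ S <;> cases σ j <;> simp [hj]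
    rw [this, Fintype.card_piFinset]
    simp [apply_ite Finset.card]
  rw [Finset.card_eq_sum_card_fiberwise (f := signSupport) (t := .powersetCard m .univ)
    fun σ hσ => by simpa using hσ]
  calc _ = ∑ S ∈ .powersetCard m .univ, 2 ^ m := Finset.sum_congr rfl fun S hS => by
          rw [Finset.filter_filter, ← (Finset.mem_powersetCard_univ.1 hS), ← hfiber]
          exact congrArg _ (Finset.filter_congr fun σ _ => and_iff_right_of_imp (congrArg _))
    _ = _ := by simp

def signVec (σ : Fin d → SignType) : EuclideanSpace ℝ (Fin d) := WithLp.toLp 2 fun j => (σ j : ℝ)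

@[simp]
theorem signVec_apply (σ : Fin d → SignType) (j : Fin d) : signVec σ j = σ j := rfl

theorem sum_abs_smul_signVec (r : ℝ) (σ : Fin d → SignType) :
    ∑ j, |(r • signVec σ) j| = |r| * #(signSupport σ) := by
  simp [abs_mul, ← Finset.mul_sum, sum_abs_coe_eq_card]

theorem inner_signVec_smul_signVec (r : ℝ) (σ : Fin d → SignType) :
    ⟪signVec σ, r • signVec σ⟫ = r * #(signSupport σ) := by
  simp [inner_eq_sum_mul, mul_left_comm _ r, ← Finset.mul_sum, SignType.coe_mul_self,
    sum_abs_coe_eq_card]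

end SignVectors

section Cube

variable {r : ℝ}

theorem mem_smul_hcube (hr : 0 < r) {x : EuclideanSpace ℝ (Fin d)} :
    x ∈ r • hcube d ↔ ∀ j, |x j| ≤ r := by
  rw [Set.mem_smul_set_iff_inv_smul_mem₀ hr.ne']
  refine forall_congr' fun j => ?_
  rw [PiLp.smul_apply, smul_eq_mul, abs_mul, abs_inv, abs_of_pos hr, inv_mul_le_iff₀ hr, mul_one]

theorem convex_hcube : Convex ℝ (hcube d) := by
  intro x hx y hy a b ha hb hab j
  calc |(a • x + b • y) j| = |a * x j + b * y j| := rfl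
    _ ≤ a * |x j| + b * |y j| := abs_mul_add_mul_le ha hb
    _ ≤ a * 1 + b * 1 := by gcongr; exacts [hx j, hy j]
    _ = 1 := by rw [mul_one, mul_one, hab]

def cubeFace (r : ℝ) (σ : Fin d → SignType) : Set (EuclideanSpace ℝ (Fin d)) :=
  {x | ∀ j, |x j| ≤ r ∧ (σ j ≠ 0 → x j = r * σ j)}

theorem cubeFace_subset_smul_hcube (hr : 0 < r) (σ : Fin d → SignType) :
    cubeFace r σ ⊆ r • hcube d :=
  fun _ hx => (mem_smul_hcube hr).2 fun j => (hx j).1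

theorem smul_signVec_mem_cubeFace (hr : 0 ≤ r) (σ : Fin d → SignType) :
    r • signVec σ ∈ cubeFace r σ := fun j =>
  ⟨by simpa [abs_mul, abs_of_nonneg hr] using mul_le_mul_of_nonneg_left (σ j).abs_coe_le_one hr,
    fun _ => rfl⟩

theorem inner_le_of_mem_smul_hcube (hr : 0 < r) (w : EuclideanSpace ℝ (Fin d))
    {x : EuclideanSpace ℝ (Fin d)} (hx : x ∈ r • hcube d) : ⟪w, x⟫ ≤ r * ∑ j, |w j| := by
  rw [inner_eq_sum_mul, Finset.mul_sum]
  exact Finset.sum_le_sum fun j _ => mul_le_abs_mul_of_abs_le ((mem_smul_hcube hr).1 hx j)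

theorem toExposed_smul_hcube (hr : 0 < r) (w : EuclideanSpace ℝ (Fin d)) :
    (innerSL ℝ w).toExposed (r • hcube d) = cubeFace r fun j => SignType.sign (w j) := by
  refine (innerSL ℝ w).toExposed_eq (cubeFace_subset_smul_hcube hr _)
    ⟨_, smul_signVec_mem_cubeFace hr.le _⟩ (fun y hy => inner_le_of_mem_smul_hcube hr w hy)
    fun x hx => ?_
  have hterm (j : Fin d) : w j * x j ≤ r * |w j| :=
    mul_le_abs_mul_of_abs_le ((mem_smul_hcube hr).1 hx j)
  simp only [innerSL_apply_apply, inner_eq_sum_mul, Finset.mul_sum,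
    Finset.sum_eq_sum_iff_of_le fun j _ => hterm j, Finset.mem_univ, true_implies,
    mul_eq_mul_abs_iff]
  simp [cubeFace, (mem_smul_hcube hr).1 hx]

theorem toExposed_smul_hcube_signVec (hr : 0 < r) (σ : Fin d → SignType) :
    (innerSL ℝ (signVec σ)).toExposed (r • hcube d) = cubeFace r σ := by
  simp [toExposed_smul_hcube hr, SignType.sign_coe]

theorem isExposed_smul_hcube_cubeFace (hr : 0 < r) (σ : Fin d → SignType) :
    IsExposed ℝ (r • hcube d) (cubeFace r σ) :=
  toExposed_smul_hcube_signVec hr σ ▸ ContinuousLinearMap.toExposed.isExposed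

theorem exists_eq_cubeFace_of_isExposed (hr : 0 < r) {F : Set (EuclideanSpace ℝ (Fin d))}
    (hF : IsExposed ℝ (r • hcube d) F) (hne : F.Nonempty) : ∃ σ, F = cubeFace r σ := by
  obtain ⟨w, rfl⟩ := hF.exists_eq_toExposed_innerSL hne
  exact ⟨_, toExposed_smul_hcube hr w⟩

theorem cubeFace_injective (hr : 0 < r) : Function.Injective (cubeFace (d := d) r) := by
  have key : ∀ σ τ, cubeFace r σ ⊆ cubeFace (d := d) r τ → ∀ j, τ j ≠ 0 → σ j = τ j :=
    fun σ τ h j hj => SignType.coe_injective <|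
      mul_left_cancel₀ hr.ne' ((h (smul_signVec_mem_cubeFace hr.le σ) j).2 hj)
  exact fun σ τ h => funext_of_ne_zero (key σ τ h.subset) (key τ σ h.symm.subset)

theorem vectorSpan_cubeFace (hr : 0 < r) (σ : Fin d → SignType) :
    vectorSpan ℝ (cubeFace r σ) =
      Submodule.span ℝ (Set.range fun j : {j // σ j = 0} => EuclideanSpace.single j.1 (1 : ℝ)) := by
  apply le_antisymm
  · refine Submodule.span_le.2 ?_
    rintro _ ⟨x, hx, y, hy, rfl⟩
    simp only [vsub_eq_sub, SetLike.mem_coe]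
    rw [← (EuclideanSpace.basisFun (Fin d) ℝ).sum_repr (x - y)]
    refine Submodule.sum_mem _ fun j _ => ?_
    by_cases hj : σ j = 0
    · exact Submodule.smul_mem _ _ (Submodule.subset_span ⟨⟨j, hj⟩, by simp⟩)
    · simp [(hx j).2 hj, (hy j).2 hj]
  · refine Submodule.span_le.2 ?_
    rintro _ ⟨⟨j, hj⟩, rfl⟩
    have hmem : r • signVec σ + r • EuclideanSpace.single j 1 ∈ cubeFace r σ := by
      intro i
      by_cases hij : i = j
      · subst hij
        simp [hj, abs_of_pos hr]
      · simpa [hij] using smul_signVec_mem_cubeFace hr.le σ i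
    have := vsub_mem_vectorSpan ℝ hmem (smul_signVec_mem_cubeFace hr.le σ)
    rwa [vsub_eq_sub, add_sub_cancel_left, Submodule.smul_mem_iff _ hr.ne'] at this

theorem finrank_vectorSpan_cubeFace (hr : 0 < r) (σ : Fin d → SignType) :
    Module.finrank ℝ (vectorSpan ℝ (cubeFace r σ)) = d - #(signSupport σ) := by
  have hli : LinearIndependent ℝ fun j : {j // σ j = 0} => EuclideanSpace.single j.1 (1 : ℝ) :=
    (PiLp.linearIndependent_single_one 2 ℝ).comp _ Subtype.val_injective
  rw [vectorSpan_cubeFace hr, finrank_span_eq_card hli, Fintype.card_subtype, signSupport]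
  have := Finset.card_filter_add_card_filter_not (s := Finset.univ) (fun j => σ j = 0)
  simp only [Finset.card_univ, Fintype.card_fin, ne_eq] at this ⊢
  omega

end Cube

section Cross

theorem convex_cross : Convex ℝ (cross d) := by
  intro x hx y hy a b ha hb hab
  calc ∑ j, |(a • x + b • y) j| = ∑ j, |a * x j + b * y j| := rfl
    _ ≤ ∑ j, (a * |x j| + b * |y j|) := Finset.sum_le_sum fun j _ => abs_mul_add_mul_le ha hb
    _ = a * ∑ j, |x j| + b * ∑ j, |y j| := by
        rw [Finset.sum_add_distrib, Finset.mul_sum, Finset.mul_sum]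
    _ ≤ a * 1 + b * 1 := by gcongr; exacts [hx, hy]
    _ = 1 := by rw [mul_one, mul_one, hab]

theorem single_mem_cross (j : Fin d) {s : ℝ} (hs : |s| ≤ 1) :
    EuclideanSpace.single j s ∈ cross d := by
  simpa [cross, apply_ite] using hs

theorem inner_le_of_mem_cross {w x : EuclideanSpace ℝ (Fin d)} {M : ℝ} (hM : 0 ≤ M)
    (hw : ∀ j, |w j| ≤ M) (hx : x ∈ cross d) : ⟪w, x⟫ ≤ M :=
  calc ⟪w, x⟫ = ∑ j, x j * w j := by simp only [inner_eq_sum_mul, mul_comm]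
    _ ≤ ∑ j, M * |x j| := Finset.sum_le_sum fun j _ => mul_le_abs_mul_of_abs_le (hw j)
    _ = M * ∑ j, |x j| := (Finset.mul_sum ..).symm
    _ ≤ M * 1 := mul_le_mul_of_nonneg_left hx hM
    _ = M := mul_one M

/-- The convex hull of the vertices `σ j • e j`, `σ j ≠ 0`, of `β_d`. -/
def crossFace (σ : Fin d → SignType) : Set (EuclideanSpace ℝ (Fin d)) :=
  {x | ∑ j, |x j| = 1 ∧ ∀ j, σ j * x j = |x j|}

theorem crossFace_subset_cross (σ : Fin d → SignType) : crossFace σ ⊆ cross d :=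
  fun _ hx => hx.1.le

theorem single_mem_crossFace {σ : Fin d → SignType} {j : Fin d} (hj : σ j ≠ 0) :
    EuclideanSpace.single j (σ j : ℝ) ∈ crossFace σ := by
  refine ⟨?_, fun i => ?_⟩
  · simp [apply_ite, SignType.abs_coe_eq_one hj]
  · by_cases hij : i = j
    · subst hij
      simp [SignType.coe_mul_self]
    · simp [hij]

theorem inv_card_smul_signVec_mem_crossFace {σ : Fin d → SignType} (hσ : σ ≠ 0) :
    (#(signSupport σ) : ℝ)⁻¹ • signVec σ ∈ crossFace σ := by
  have hm : (0 : ℝ) < #(signSupport σ) := by exact_mod_cast card_signSupport_pos hσ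
  refine ⟨by rw [sum_abs_smul_signVec, abs_inv, abs_of_pos hm, inv_mul_cancel₀ hm.ne'], fun j => ?_⟩
  simp [abs_mul, mul_left_comm _ (#(signSupport σ) : ℝ)⁻¹, SignType.coe_mul_self]

theorem toExposed_cross {w : EuclideanSpace ℝ (Fin d)} {σ : Fin d → SignType} {M : ℝ}
    (hM : 0 < M) (hσ : σ ≠ 0) (hsupp : ∀ j, σ j ≠ 0 → w j = σ j * M)
    (hoff : ∀ j, σ j = 0 → |w j| < M) :
    (innerSL ℝ w).toExposed (cross d) = crossFace σ := by
  obtain ⟨j₀, hj₀⟩ := Function.ne_iff.1 hσ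
  have hw : ∀ j, |w j| ≤ M := fun j => by
    by_cases h : σ j = 0
    · exact (hoff j h).le
    · rw [hsupp j h, abs_mul, abs_of_pos hM]
      exact mul_le_of_le_one_left hM.le (σ j).abs_coe_le_one
  have hterm (x : EuclideanSpace ℝ (Fin d)) (j : Fin d) : w j * x j ≤ M * |x j| :=
    mul_comm (x j) (w j) ▸ mul_le_abs_mul_of_abs_le (hw j)
  have hterm_iff (x : EuclideanSpace ℝ (Fin d)) (j : Fin d) :
      w j * x j = M * |x j| ↔ σ j * x j = |x j| := by
    by_cases h : σ j = 0
    · rw [h, SignType.coe_zero, zero_mul, eq_comm (a := (0 : ℝ)), abs_eq_zero]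
      refine ⟨fun h' => by_contra fun hx => ?_, fun hx => by simp [hx]⟩
      have := mul_lt_mul_of_pos_right (hoff j h) (abs_pos.2 hx)
      rw [← abs_mul] at this
      exact (le_abs_self _).not_gt (h' ▸ this)
    · rw [hsupp j h, mul_right_comm, mul_comm _ M, mul_right_inj' hM.ne']
  refine (innerSL ℝ w).toExposed_eq (crossFace_subset_cross σ) ⟨_, single_mem_crossFace hj₀⟩
    (M := M) (fun y hy => inner_le_of_mem_cross hM.le hw hy) fun x hx => ?_
  simp only [innerSL_apply_apply, inner_eq_sum_mul]
  constructor
  · intro h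
    have hle : ∑ j, w j * x j ≤ M * ∑ j, |x j| :=
      (Finset.sum_le_sum fun j _ => hterm x j).trans_eq (Finset.mul_sum ..).symm
    have hsum : ∑ j, |x j| = 1 := le_antisymm hx (le_of_mul_le_mul_left (by linarith) hM)
    refine ⟨hsum, fun j => (hterm_iff x j).1 ?_⟩
    refine (Finset.sum_eq_sum_iff_of_le fun j _ => hterm x j).1 ?_ j (Finset.mem_univ j)
    rw [← Finset.mul_sum, hsum, mul_one, h]
  · rintro ⟨hsum, hx⟩
    rw [Finset.sum_congr rfl fun j _ => (hterm_iff x j).2 (hx j), ← Finset.mul_sum, hsum, mul_one]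

theorem toExposed_cross_signVec {σ : Fin d → SignType} (hσ : σ ≠ 0) :
    (innerSL ℝ (signVec σ)).toExposed (cross d) = crossFace σ :=
  toExposed_cross one_pos hσ (fun j _ => (mul_one _).symm) fun j hj => by simp [hj]

theorem isExposed_cross_crossFace {σ : Fin d → SignType} (hσ : σ ≠ 0) :
    IsExposed ℝ (cross d) (crossFace σ) :=
  toExposed_cross_signVec hσ ▸ ContinuousLinearMap.toExposed.isExposed

theorem eq_cross_or_eq_crossFace_of_isExposed {F : Set (EuclideanSpace ℝ (Fin d))}
    (hF : IsExposed ℝ (cross d) F) (hne : F.Nonempty) :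
    F = cross d ∨ ∃ σ, σ ≠ 0 ∧ F = crossFace σ := by
  obtain ⟨w, rfl⟩ := hF.exists_eq_toExposed_innerSL hne
  by_cases hw : ∀ j, w j = 0
  · left
    ext x
    simp [ContinuousLinearMap.toExposed, inner_eq_sum_mul, hw]
  right
  push Not at hw
  obtain ⟨j₁, hj₁⟩ := hw
  obtain ⟨j₀, -, hj₀⟩ := Finset.univ.exists_max_image (fun j => |w j|) ⟨j₁, Finset.mem_univ _⟩
  have hM : 0 < |w j₀| := (abs_pos.2 hj₁).trans_le (hj₀ j₁ (Finset.mem_univ _))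
  -- the face is spanned by the vertices `± e j` at the coordinates where `|w j|` is maximal
  set σ : Fin d → SignType := fun j => if |w j| = |w j₀| then SignType.sign (w j) else 0
  have hσ : σ ≠ 0 := Function.ne_iff.2 ⟨j₀, by simpa [σ] using abs_pos.1 hM⟩
  refine ⟨σ, hσ, toExposed_cross hM hσ (fun j hj => ?_) fun j hj => ?_⟩
  · have hj' : |w j| = |w j₀| := by by_contra h; simp [σ, h] at hj
    rw [show σ j = SignType.sign (w j) from if_pos hj', ← hj', sign_mul_abs]
  · by_cases hj' : |w j| = |w j₀|
    · simp only [σ, hj', if_true, sign_eq_zero_iff] at hj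
      rw [hj, abs_zero] at hj'
      exact absurd hj' hM.ne
    · exact (hj₀ j (Finset.mem_univ _)).lt_of_ne hj'

theorem crossFace_subset_convexHull (σ : Fin d → SignType) :
    crossFace σ ⊆ convexHull ℝ
      (Set.range fun j : signSupport σ => EuclideanSpace.single j.1 (σ j : ℝ)) := by
  rintro x ⟨hsum, hx⟩
  have hx_off : ∀ j ∉ signSupport σ, x j = 0 := fun j hj => by
    simp only [signSupport, Finset.mem_filter, Finset.mem_univ, true_and, not_not] at hj
    rw [← abs_eq_zero, ← hx j, hj, SignType.coe_zero, zero_mul]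
  have hx_eq : x = ∑ j ∈ signSupport σ, |x j| • EuclideanSpace.single j (σ j : ℝ) := by
    ext i
    by_cases hi : i ∈ signSupport σ
    · simp only [WithLp.ofLp_sum, Finset.sum_apply, PiLp.smul_apply, PiLp.single_apply,
        smul_eq_mul, mul_ite, mul_zero, Finset.sum_ite_eq, if_pos hi]
      rw [← hx i, mul_comm, ← mul_assoc, SignType.coe_mul_self,
        SignType.abs_coe_eq_one (Finset.mem_filter.1 hi).2, one_mul]
    · simp [Pi.single_apply, hi, hx_off i hi]
  rw [hx_eq]
  refine (convex_convexHull ℝ _).sum_mem (fun j _ => abs_nonneg _) ?_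
    fun j hj => subset_convexHull ℝ _ ⟨⟨j, hj⟩, rfl⟩
  rw [← hsum]
  exact Finset.sum_subset (Finset.subset_univ _) fun j _ hj => by simp [hx_off j hj]

theorem finrank_vectorSpan_crossFace {σ : Fin d → SignType} (hσ : σ ≠ 0) :
    Module.finrank ℝ (vectorSpan ℝ (crossFace σ)) = #(signSupport σ) - 1 := by
  set v := fun j : signSupport σ => EuclideanSpace.single j.1 (σ j : ℝ)
  have hspan : vectorSpan ℝ (crossFace σ) = vectorSpan ℝ (Set.range v) := by
    refine le_antisymm ?_ (vectorSpan_mono ℝ (Set.range_subset_iff.2 fun j =>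
      single_mem_crossFace (Finset.mem_filter.1 j.2).2))
    rw [← direction_affineSpan ℝ (Set.range v), ← affineSpan_convexHull, direction_affineSpan]
    exact vectorSpan_mono ℝ (crossFace_subset_convexHull σ)
  have hv : LinearIndependent ℝ v := by
    refine linearIndependent_of_ne_zero_of_inner_eq_zero (fun j => ?_) fun i j hij => ?_
    · simpa [v] using SignType.coe_injective.ne (Finset.mem_filter.1 j.2).2
    · simp [v, EuclideanSpace.inner_single_left, Subtype.val_injective.ne hij]
  have := card_signSupport_pos hσ
  rw [hspan]
  exact hv.affineIndependent.finrank_vectorSpan (by rw [Fintype.card_coe]; omega)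

theorem finrank_vectorSpan_cross : Module.finrank ℝ (vectorSpan ℝ (cross d)) = d := by
  have : vectorSpan ℝ (cross d) = ⊤ := by
    refine eq_top_iff.2 <| (EuclideanSpace.basisFun (Fin d) ℝ).toBasis.span_eq.symm.le.trans <|
      Submodule.span_le.2 ?_
    rintro _ ⟨j, rfl⟩
    have hzero : (0 : EuclideanSpace ℝ (Fin d)) ∈ cross d := by simp [cross]
    simpa using vsub_mem_vectorSpan ℝ (single_mem_cross j abs_one.le) hzero
  rw [this, finrank_top, finrank_euclideanSpace_fin]

theorem crossFace_injective : Function.Injective (crossFace (d := d)) := by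
  have key : ∀ σ τ, crossFace σ ⊆ crossFace (d := d) τ → ∀ j, σ j ≠ 0 → τ j = σ j := by
    intro σ τ h j hj
    have := (h (single_mem_crossFace hj)).2 j
    simp only [PiLp.single_apply, if_true, SignType.abs_coe_eq_one hj] at this
    revert hj this
    cases σ j <;> cases τ j <;> norm_num
  exact fun σ τ h => funext_of_ne_zero (key τ σ h.symm.subset) (key σ τ h.subset)

end Cross

section Rho

variable {k : ℝ}

theorem cross_subset_rho : cross d ⊆ rho d k :=
  Set.subset_union_left.trans (subset_convexHull ℝ _)

theorem smul_hcube_subset_rho : (1 / k) • hcube d ⊆ rho d k :=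
  Set.subset_union_right.trans (subset_convexHull ℝ _)

theorem exists_single_forall_inner_le [NeZero d] (w : EuclideanSpace ℝ (Fin d)) :
    ∃ j, ∃ s : ℝ, |s| = 1 ∧ ∀ y ∈ cross d, ⟪w, y⟫ ≤ ⟪w, EuclideanSpace.single j s⟫ := by
  obtain ⟨j, -, hj⟩ := Finset.univ.exists_max_image (fun j => |w j|) Finset.univ_nonempty
  obtain ⟨s, hs, hsw⟩ : ∃ s : ℝ, |s| = 1 ∧ s * w j = |w j| := by
    rcases abs_choice (w j) with h | h
    exacts [⟨1, abs_one, by rw [h, one_mul]⟩, ⟨-1, by simp, by rw [h, neg_one_mul]⟩]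
  refine ⟨j, s, hs, fun y hy => ?_⟩
  rw [EuclideanSpace.inner_single_right, conj_trivial, hsw]
  exact inner_le_of_mem_cross (abs_nonneg _) (fun i => hj i (Finset.mem_univ i)) hy

theorem exists_forall_inner_le_of_mem_smul_hcube {r : ℝ} (hr : 0 < r)
    (w : EuclideanSpace ℝ (Fin d)) :
    ∃ v ∈ r • hcube d, (∀ j, |v j| = r) ∧ ∀ y ∈ r • hcube d, ⟪w, y⟫ ≤ ⟪w, v⟫ := by
  set v : EuclideanSpace ℝ (Fin d) := WithLp.toLp 2 fun j => if 0 ≤ w j then r else -r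
  have hv : ∀ j, |v j| = r := fun j => by
    simp only [v]
    split_ifs <;> simp [abs_of_pos hr]
  have hwv : ⟪w, v⟫ = r * ∑ j, |w j| := by
    rw [inner_eq_sum_mul, Finset.mul_sum]
    refine Finset.sum_congr rfl fun j _ => ?_
    simp only [v]
    split_ifs with h
    · rw [abs_of_nonneg h, mul_comm]
    · rw [abs_of_neg (not_le.1 h)]
      ring
  exact ⟨v, (mem_smul_hcube hr).2 fun j => (hv j).le, hv,
    fun y hy => hwv ▸ inner_le_of_mem_smul_hcube hr w hy⟩

theorem disjoint_cross_of_isExposed_rho [NeZero d] (hk : 1 < k)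
    {F : Set (EuclideanSpace ℝ (Fin d))} (hF : IsExposed ℝ (rho d k) F)
    (hF_sub : F ⊆ (1 / k) • hcube d) : Disjoint F (cross d) := by
  refine Set.disjoint_left.2 fun x hxF hx => ?_
  obtain ⟨w, rfl⟩ := hF.exists_eq_toExposed_innerSL ⟨x, hxF⟩
  obtain ⟨j, s, hs, hmax⟩ := exists_single_forall_inner_le w
  -- a vertex `± e j` of `β_d` maximising `⟪w, ·⟫` over `β_d` would lie in the face
  have hv : EuclideanSpace.single j s ∈ (innerSL ℝ w).toExposed (rho d k) :=
    ⟨cross_subset_rho (single_mem_cross j hs.le), fun y hy =>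
      (hxF.2 y hy).trans (by simpa using hmax x hx)⟩
  have := (mem_smul_hcube (by positivity)).1 (hF_sub hv) j
  rw [PiLp.single_apply, if_pos rfl, hs, le_div_iff₀ (by positivity), one_mul] at this
  linarith

theorem disjoint_smul_hcube_of_isExposed_rho (hk : 0 < k) (hkd : k < d)
    {F : Set (EuclideanSpace ℝ (Fin d))} (hF : IsExposed ℝ (rho d k) F)
    (hF_sub : F ⊆ cross d) : Disjoint F ((1 / k) • hcube d) := by
  refine Set.disjoint_left.2 fun x hxF hx => ?_
  obtain ⟨w, rfl⟩ := hF.exists_eq_toExposed_innerSL ⟨x, hxF⟩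
  obtain ⟨v, hv_mem, hv_abs, hmax⟩ := exists_forall_inner_le_of_mem_smul_hcube
    (r := 1 / k) (by positivity) w
  have hv : v ∈ (innerSL ℝ w).toExposed (rho d k) :=
    ⟨smul_hcube_subset_rho hv_mem, fun y hy => (hxF.2 y hy).trans (by simpa using hmax x hx)⟩
  have : ∑ j, |v j| ≤ 1 := hF_sub hv
  simp only [hv_abs, Finset.sum_const, Finset.card_univ, Fintype.card_fin, nsmul_eq_mul,
    mul_one_div, div_le_one hk] at this
  linarith

theorem isExposed_rho_cubeFace_iff [NeZero d] (hk : 1 < k) (σ : Fin d → SignType) :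
    IsExposed ℝ (rho d k) (cubeFace (1 / k) σ) ↔ k < #(signSupport σ) := by
  have hr : (0 : ℝ) < 1 / k := by positivity
  have hc := smul_signVec_mem_cubeFace hr.le σ
  constructor
  · intro h
    -- the centre of the face lies in `β_d` unless `k < #(signSupport σ)`
    have := Set.disjoint_left.1
      (disjoint_cross_of_isExposed_rho hk h (cubeFace_subset_smul_hcube hr σ)) hc
    simp only [cross, Set.mem_ofPred_eq, sum_abs_smul_signVec, abs_of_pos hr, not_le] at this
    rwa [one_div_mul_eq_div, one_lt_div (by positivity)] at this
  · intro h
    have hface : (innerSL ℝ (signVec σ)).toExposed (rho d k) = cubeFace (1 / k) σ := by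
      rw [rho, ContinuousLinearMap.toExposed_convexHull,
        ContinuousLinearMap.toExposed_union_of_lt _ (cubeFace_subset_smul_hcube hr σ hc),
        toExposed_smul_hcube_signVec hr, (isExposed_smul_hcube_cubeFace hr σ).convex
          (convex_hcube.smul _) |>.convexHull_eq]
      intro a ha
      simp only [innerSL_apply_apply, inner_signVec_smul_signVec]
      calc ⟪signVec σ, a⟫ ≤ 1 :=
            inner_le_of_mem_cross zero_le_one (fun j => (σ j).abs_coe_le_one) ha
        _ < 1 / k * #(signSupport σ) := by
            rwa [one_div_mul_eq_div, one_lt_div (by positivity)]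
    exact hface ▸ ContinuousLinearMap.toExposed.isExposed

theorem isExposed_rho_crossFace_iff (hk : 0 < k) (hkd : k < d) {σ : Fin d → SignType}
    (hσ : σ ≠ 0) : IsExposed ℝ (rho d k) (crossFace σ) ↔ #(signSupport σ) < k := by
  obtain ⟨j₀, hj₀⟩ := Function.ne_iff.1 hσ
  have hm : (0 : ℝ) < #(signSupport σ) := by exact_mod_cast card_signSupport_pos hσ
  constructor
  · intro h
    -- the barycentre of the face lies in `γ_d / k` unless `#(signSupport σ) < k`
    have := Set.disjoint_left.1
      (disjoint_smul_hcube_of_isExposed_rho hk hkd h (crossFace_subset_cross σ))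
      (inv_card_smul_signVec_mem_crossFace hσ)
    rw [mem_smul_hcube (by positivity)] at this
    push Not at this
    obtain ⟨j, hj⟩ := this
    have hle : |((#(signSupport σ) : ℝ)⁻¹ • signVec σ) j| ≤ (#(signSupport σ) : ℝ)⁻¹ := by
      simpa [abs_mul] using mul_le_of_le_one_right (by positivity) (σ j).abs_coe_le_one
    have := hj.trans_le hle
    rwa [one_div, inv_lt_inv₀ hk hm] at this
  · intro h
    have hface : (innerSL ℝ (signVec σ)).toExposed (rho d k) = crossFace σ := by
      rw [rho, ContinuousLinearMap.toExposed_convexHull, Set.union_comm,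
        ContinuousLinearMap.toExposed_union_of_lt _ (crossFace_subset_cross σ
          (single_mem_crossFace hj₀)), toExposed_cross_signVec hσ,
        (isExposed_cross_crossFace hσ).convex convex_cross |>.convexHull_eq]
      intro a ha
      simp only [innerSL_apply_apply, EuclideanSpace.inner_single_right, signVec_apply,
        conj_trivial, SignType.coe_mul_self, SignType.abs_coe_eq_one hj₀]
      calc ⟪signVec σ, a⟫ ≤ 1 / k * ∑ j, |signVec σ j| :=
            inner_le_of_mem_smul_hcube (by positivity) _ ha
        _ < 1 := by
            simp only [signVec_apply, sum_abs_coe_eq_card]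
            rwa [one_div_mul_eq_div, div_lt_one hk]
    exact hface ▸ ContinuousLinearMap.toExposed.isExposed

end Rho

def commonFaces {E : Type*} [AddCommGroup E] [Module ℝ E] [TopologicalSpace E] (P Q : Set E)
    (i : ℕ) : Set (Set E) :=
  {F | IsExposed ℝ P F ∧ IsExposed ℝ Q F ∧ F.Nonempty ∧ Module.finrank ℝ (vectorSpan ℝ F) = i}

section Count

variable {k : ℝ}

theorem commonFaces_rho_smul_hcube [NeZero d] (hk : 1 < k) (i : ℕ) :
    commonFaces (rho d k) ((1 / k) • hcube d) i =
      cubeFace (1 / k) '' {σ | k < #(signSupport σ) ∧ d - #(signSupport σ) = i} := by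
  have hr : (0 : ℝ) < 1 / k := by positivity
  ext F
  constructor
  · rintro ⟨hρ, hcube, hne, rfl⟩
    obtain ⟨σ, rfl⟩ := exists_eq_cubeFace_of_isExposed hr hcube hne
    exact ⟨σ, ⟨(isExposed_rho_cubeFace_iff hk σ).1 hρ, (finrank_vectorSpan_cubeFace hr σ).symm⟩,
      rfl⟩
  · rintro ⟨σ, ⟨hσ, rfl⟩, rfl⟩
    exact ⟨(isExposed_rho_cubeFace_iff hk σ).2 hσ, isExposed_smul_hcube_cubeFace hr σ,
      ⟨_, smul_signVec_mem_cubeFace hr.le σ⟩, finrank_vectorSpan_cubeFace hr σ⟩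

theorem commonFaces_rho_cross (hk : 0 < k) (hkd : k < d) {i : ℕ} (hi : i < d) :
    commonFaces (rho d k) (cross d) i =
      crossFace '' {σ | #(signSupport σ) < k ∧ #(signSupport σ) = i + 1} := by
  ext F
  constructor
  · rintro ⟨hρ, hcross, hne, rfl⟩
    rcases eq_cross_or_eq_crossFace_of_isExposed hcross hne with rfl | ⟨σ, hσ, rfl⟩
    · rw [finrank_vectorSpan_cross] at hi
      exact absurd hi (lt_irrefl d)
    · refine ⟨σ, ⟨(isExposed_rho_crossFace_iff hk hkd hσ).1 hρ, ?_⟩, rfl⟩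
      have := card_signSupport_pos hσ
      rw [finrank_vectorSpan_crossFace hσ]
      omega
  · rintro ⟨σ, ⟨hσk, hσi⟩, rfl⟩
    have hσ : σ ≠ 0 := by
      rintro rfl
      simp [signSupport] at hσi
    refine ⟨(isExposed_rho_crossFace_iff hk hkd hσ).2 hσk, isExposed_cross_crossFace hσ,
      ⟨_, inv_card_smul_signVec_mem_crossFace hσ⟩, ?_⟩
    rw [finrank_vectorSpan_crossFace hσ, hσi, Nat.add_sub_cancel]

theorem ncard_commonFaces_rho_smul_hcube [NeZero d] (hk : 1 < k) {i : ℕ} (hi : (i : ℝ) < d - k) :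
    (commonFaces (rho d k) ((1 / k) • hcube d) i).ncard = 2 ^ (d - i) * d.choose i := by
  have hid : i < d := by exact_mod_cast (show (i : ℝ) < d by linarith)
  have : {σ : Fin d → SignType | k < #(signSupport σ) ∧ d - #(signSupport σ) = i} =
      (({σ | #(signSupport σ) = d - i} : Finset (Fin d → SignType)) : Set _) := by
    ext σ
    have hσd : #(signSupport σ) ≤ d := (Finset.card_le_univ _).trans_eq (Fintype.card_fin d)
    simp only [Set.mem_ofPred_eq, Finset.coe_filter, Finset.mem_univ, true_and]
    refine ⟨fun h => by omega, fun h => ⟨?_, by omega⟩⟩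
    rw [h, Nat.cast_sub hid.le]
    linarith
  rw [commonFaces_rho_smul_hcube hk, this,
    (cubeFace_injective (by positivity)).injOn.ncard_image, Set.ncard_coe_finset,
    card_filter_card_signSupport_eq, Nat.choose_symm hid.le, mul_comm]

theorem commonFaces_rho_smul_hcube_eq_empty [NeZero d] (hk : 1 < k) {i : ℕ}
    (hi : (d : ℝ) - k ≤ i) : commonFaces (rho d k) ((1 / k) • hcube d) i = ∅ := by
  rw [commonFaces_rho_smul_hcube hk, Set.image_eq_empty]
  ext σ
  simp only [Set.mem_ofPred_eq, Set.mem_empty_iff_false, iff_false, not_and]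
  intro hσ hσi
  have hσd : #(signSupport σ) ≤ d := (Finset.card_le_univ _).trans_eq (Fintype.card_fin d)
  have : (#(signSupport σ) : ℝ) = d - i := by
    rw [← Nat.cast_sub (by omega : i ≤ d)]
    exact_mod_cast (by omega : #(signSupport σ) = d - i)
  linarith

theorem ncard_commonFaces_rho_cross (hk : 0 < k) (hkd : k < d) {i : ℕ} (hi : (i : ℝ) < k - 1) :
    (commonFaces (rho d k) (cross d) i).ncard = 2 ^ (i + 1) * d.choose (i + 1) := by
  have hid : i < d := by exact_mod_cast (show (i : ℝ) < d by linarith)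
  have : {σ : Fin d → SignType | #(signSupport σ) < k ∧ #(signSupport σ) = i + 1} =
      (({σ | #(signSupport σ) = i + 1} : Finset (Fin d → SignType)) : Set _) := by
    ext σ
    simp only [Set.mem_ofPred_eq, Finset.coe_filter, Finset.mem_univ, true_and]
    refine ⟨fun h => h.2, fun h => ⟨?_, h⟩⟩
    rw [h]
    push_cast
    linarith
  rw [commonFaces_rho_cross hk hkd hid, this, crossFace_injective.injOn.ncard_image,
    Set.ncard_coe_finset, card_filter_card_signSupport_eq, mul_comm]

theorem commonFaces_rho_cross_eq_empty (hk : 0 < k) (hkd : k < d) {i : ℕ} (hi : k - 1 ≤ i)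
    (hid : i < d) : commonFaces (rho d k) (cross d) i = ∅ := by
  rw [commonFaces_rho_cross hk hkd hid, Set.image_eq_empty]
  ext σ
  simp only [Set.mem_ofPred_eq, Set.mem_empty_iff_false, iff_false, not_and]
  intro hσ hσi
  rw [hσi] at hσ
  push_cast at hσ
  linarith

end Count

theorem shared_faces_rho_general (d : ℕ) (k : ℝ) (hk1 : 1 ≤ k) (hkd : k ≤ d) :
    (1 < k → ∀ i : ℕ,
      ((i : ℝ) < d - k →
        {F : Set (EuclideanSpace ℝ (Fin d)) | IsExposed ℝ (rho d k) F ∧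
            IsExposed ℝ ((1 / k) • hcube d) F ∧ F.Nonempty ∧
            Module.finrank ℝ (vectorSpan ℝ F) = i}.ncard = 2 ^ (d - i) * d.choose i) ∧
      ((d : ℝ) - k ≤ (i : ℝ) → i < d →
        {F : Set (EuclideanSpace ℝ (Fin d)) | IsExposed ℝ (rho d k) F ∧
            IsExposed ℝ ((1 / k) • hcube d) F ∧ F.Nonempty ∧
            Module.finrank ℝ (vectorSpan ℝ F) = i} = ∅)) ∧
    (k < d → ∀ i : ℕ,
      ((i : ℝ) < k - 1 →
        {F : Set (EuclideanSpace ℝ (Fin d)) | IsExposed ℝ (rho d k) F ∧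
            IsExposed ℝ (cross d) F ∧ F.Nonempty ∧
            Module.finrank ℝ (vectorSpan ℝ F) = i}.ncard = 2 ^ (i + 1) * d.choose (i + 1)) ∧
      (k - 1 ≤ (i : ℝ) → i < d →
        {F : Set (EuclideanSpace ℝ (Fin d)) | IsExposed ℝ (rho d k) F ∧
            IsExposed ℝ (cross d) F ∧ F.Nonempty ∧
            Module.finrank ℝ (vectorSpan ℝ F) = i} = ∅)) := by
  have hk : 0 < k := by linarith
  have : NeZero d := ⟨by rintro rfl; simp at hkd; linarith⟩
  exact ⟨fun hk' i => ⟨ncard_commonFaces_rho_smul_hcube hk',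
      fun hi _ => commonFaces_rho_smul_hcube_eq_empty hk' hi⟩,
    fun hkd' i => ⟨ncard_commonFaces_rho_cross hk hkd', commonFaces_rho_cross_eq_empty hk hkd'⟩⟩

/-- If `k > 1` then `ρ_{d,k}` and `γ_d/k` share exactly `2^{d-i} binom(d,i)` faces of
dimension `i` when `0 ≤ i < d-k` and none when `d-k ≤ i < d`; if `k < d` then `ρ_{d,k}` and
`β_d` share exactly `2^{i+1} binom(d,i+1)` faces of dimension `i` when `0 ≤ i < k-1` and
none when `k-1 ≤ i < d`. -/
theorem shared_faces_rho (d : ℕ) (hd : 1 ≤ d) (k : ℝ) (hk1 : 1 ≤ k) (hkd : k ≤ d) :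
    (1 < k → ∀ i : ℕ,
      ((i : ℝ) < d - k →
        {F : Set (EuclideanSpace ℝ (Fin d)) | IsExposed ℝ (rho d k) F ∧
            IsExposed ℝ ((1 / k) • hcube d) F ∧ F.Nonempty ∧
            Module.finrank ℝ (vectorSpan ℝ F) = i}.ncard = 2 ^ (d - i) * d.choose i) ∧
      ((d : ℝ) - k ≤ (i : ℝ) → i < d →
        {F : Set (EuclideanSpace ℝ (Fin d)) | IsExposed ℝ (rho d k) F ∧
            IsExposed ℝ ((1 / k) • hcube d) F ∧ F.Nonempty ∧
            Module.finrank ℝ (vectorSpan ℝ F) = i} = ∅)) ∧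
    (k < d → ∀ i : ℕ,
      ((i : ℝ) < k - 1 →
        {F : Set (EuclideanSpace ℝ (Fin d)) | IsExposed ℝ (rho d k) F ∧
            IsExposed ℝ (cross d) F ∧ F.Nonempty ∧
            Module.finrank ℝ (vectorSpan ℝ F) = i}.ncard = 2 ^ (i + 1) * d.choose (i + 1)) ∧
      (k - 1 ≤ (i : ℝ) → i < d →
        {F : Set (EuclideanSpace ℝ (Fin d)) | IsExposed ℝ (rho d k) F ∧
            IsExposed ℝ (cross d) F ∧ F.Nonempty ∧
            Module.finrank ℝ (vectorSpan ℝ F) = i} = ∅)) :=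
  shared_faces_rho_general d k hk1 hkd
end
end
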